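/- arXiv:1304.0152 — 4 statements merged into one kernel-verified Lean document; each statement's English description precedes it below -/
import Mathlib

section
/- Let X be a metric space and let M be a nonempty family of finite Borel measures on X. Define, for every Borel set B ⊆ X, (⋀_{ν∈M} ν)(B) = inf { Σ_{j=1}^∞ μ_j(B_j) }, where the infimum is taken over all countable families {μ_j}_{j=1}^∞ ⊆ M and all Borel partitions {B_j} of B (disjoint countable families of Borel sets with ⋃_j B_j = B). Then ⋀_{ν∈M} ν is a finite Borel measure on X satisfying (⋀_{ν∈M} ν)(B) ≤ ν'(B) for every ν' ∈ M and every Borel set B; moreover, if some ν' ∈ M is tight, then ⋀_{ν∈M} ν is tight. -/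
open MeasureTheory

noncomputable section

/-- A measure is tight if its complements of compact sets have arbitrarily small measure. -/
def IsTightMeasure {X : Type*} [TopologicalSpace X] [MeasurableSpace X] (μ : Measure X) : Prop :=
  ∀ ε : ENNReal, 0 < ε → ∃ K : Set X, IsCompact K ∧ μ Kᶜ < ε

/-- The infimum `⋀_{ν ∈ M} ν` of a nonempty family `M` of finite Borel measures, defined on a
Borel set `B` as the infimum of `Σ_j μ_j(B_j)` over countable subfamilies `{μ_j} ⊆ M` and
Borel partitions `{B_j}` of `B`, is a finite Borel measure, it is bounded by every member
of `M`, and it is tight as soon as some member of `M` is tight. -/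
theorem measure_family_inf {X : Type*} [MetricSpace X] [MeasurableSpace X] [BorelSpace X]
    (M : Set (Measure X)) (hM : M.Nonempty) (hfin : ∀ μ ∈ M, IsFiniteMeasure μ) :
    ∃ ν : Measure X, IsFiniteMeasure ν ∧
      (∀ B : Set X, MeasurableSet B →
        ν B = sInf {m : ENNReal | ∃ (μs : ℕ → Measure X) (Bs : ℕ → Set X),
          (∀ j, μs j ∈ M) ∧ (∀ j, MeasurableSet (Bs j)) ∧
          Pairwise (Function.onFun Disjoint Bs) ∧ (⋃ j, Bs j) = B ∧
          m = ∑' j, μs j (Bs j)}) ∧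
      (∀ ν' ∈ M, ∀ B : Set X, MeasurableSet B → ν B ≤ ν' B) ∧
      ((∃ ν' ∈ M, IsTightMeasure ν') → IsTightMeasure ν) := by
  obtain ⟨μ0, hμ0⟩ := hM
  haveI hμ0fin : IsFiniteMeasure μ0 := hfin μ0 hμ0
  set S : Set X → Set ENNReal := fun B =>
    {m : ENNReal | ∃ (μs : ℕ → Measure X) (Bs : ℕ → Set X),
      (∀ j, μs j ∈ M) ∧ (∀ j, MeasurableSet (Bs j)) ∧
      Pairwise (Function.onFun Disjoint Bs) ∧ (⋃ j, Bs j) = B ∧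
      m = ∑' j, μs j (Bs j)} with hSdef
  set F : Set X → ENNReal := fun B => sInf (S B) with hFdef
  -- Any member of M gives an element of S B, witnessing F B ≤ ν' B.
  have hmem : ∀ ν' ∈ M, ∀ B : Set X, MeasurableSet B → ν' B ∈ S B := by
    intro ν' hν' B hB
    refine ⟨fun _ => ν', fun j => if j = 0 then B else ∅, fun _ => hν', ?_, ?_, ?_, ?_⟩
    · intro j
      by_cases hj : j = 0 <;> simp [hj, hB]
    · intro i j hij
      by_cases hi : i = 0 <;> by_cases hj : j = 0 <;>
        simp_all [Function.onFun]
    · ext x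
      simp only [Set.mem_iUnion]
      constructor
      · rintro ⟨j, hj⟩
        by_cases h : j = 0
        · simpa [h] using hj
        · simp [h] at hj
      · intro h; exact ⟨0, by simpa using h⟩
    · rw [tsum_eq_single 0 (fun b hb => by simp [hb])]
      simp
  have hle : ∀ ν' ∈ M, ∀ B : Set X, MeasurableSet B → F B ≤ ν' B :=
    fun ν' hν' B hB => sInf_le (hmem ν' hν' B hB)
  have hFfin : ∀ B : Set X, MeasurableSet B → F B < ⊤ := by
    intro B hB
    exact lt_of_le_of_lt (le_trans (hle μ0 hμ0 B hB) (measure_mono (Set.subset_univ B)))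
      (measure_lt_top μ0 _)
  have hF0 : F ∅ = 0 :=
    le_antisymm (by simpa using hle μ0 hμ0 ∅ MeasurableSet.empty) zero_le
  -- superadditivity
  have hsuper : ∀ f : ℕ → Set X, (∀ i, MeasurableSet (f i)) → Pairwise (Function.onFun Disjoint f) →
      ∑' i, F (f i) ≤ F (⋃ i, f i) := by
    intro f hfm hfd
    refine le_sInf ?_
    rintro m ⟨μs, Bs, hμs, hBm, hBd, hBu, rfl⟩
    have hBsub : ∀ j, Bs j ⊆ ⋃ i, f i := by
      intro j
      rw [← hBu]; exact Set.subset_iUnion Bs j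
    have key : ∀ i, F (f i) ≤ ∑' j, μs j (Bs j ∩ f i) := by
      intro i
      refine sInf_le ⟨μs, fun j => Bs j ∩ f i, hμs, fun j => (hBm j).inter (hfm i), ?_, ?_, rfl⟩
      · intro a b hab
        exact Disjoint.mono Set.inter_subset_left Set.inter_subset_left (hBd hab)
      · rw [← Set.iUnion_inter, hBu]
        exact Set.inter_eq_right.mpr (Set.subset_iUnion f i)
    calc ∑' i, F (f i) ≤ ∑' i, ∑' j, μs j (Bs j ∩ f i) := ENNReal.tsum_le_tsum key
      _ = ∑' j, ∑' i, μs j (Bs j ∩ f i) := ENNReal.tsum_comm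
      _ = ∑' j, μs j (⋃ i, Bs j ∩ f i) := by
          refine tsum_congr fun j => ?_
          rw [measure_iUnion ?_ fun i => (hBm j).inter (hfm i)]
          intro a b hab
          exact Disjoint.mono Set.inter_subset_right Set.inter_subset_right (hfd hab)
      _ = ∑' j, μs j (Bs j) := by
          refine tsum_congr fun j => ?_
          rw [← Set.inter_iUnion]
          congr 1
          exact Set.inter_eq_left.mpr (hBsub j)
  -- subadditivity
  have hsub : ∀ f : ℕ → Set X, (∀ i, MeasurableSet (f i)) → Pairwise (Function.onFun Disjoint f) →
      F (⋃ i, f i) ≤ ∑' i, F (f i) := by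
    intro f hfm hfd
    refine ENNReal.le_of_forall_pos_le_add fun ε hε _ => ?_
    obtain ⟨δ, hδpos, hδsum⟩ :=
      ENNReal.exists_pos_sum_of_countable (ε := (ε : ENNReal)) (by exact_mod_cast hε.ne') ℕ
    have hchoose : ∀ i : ℕ, ∃ m ∈ S (f i), m < F (f i) + δ i := by
      intro i
      rw [← sInf_lt_iff]
      exact ENNReal.lt_add_right (hFfin (f i) (hfm i)).ne
        (by exact_mod_cast (hδpos i).ne')
    choose m hmS hmlt using hchoose
    choose μs Bs hμs hBm hBd hBu hmsum using hmS
    set e : ℕ ≃ ℕ × ℕ := (Denumerable.eqv (ℕ × ℕ)).symm with he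
    have hBsub : ∀ i j, Bs i j ⊆ f i := by
      intro i j
      rw [← hBu i]; exact Set.subset_iUnion (Bs i) j
    have hmemS : (∑' n, μs (e n).1 (e n).2 (Bs (e n).1 (e n).2)) ∈ S (⋃ i, f i) := by
      refine ⟨fun n => μs (e n).1 (e n).2, fun n => Bs (e n).1 (e n).2,
        fun n => hμs _ _, fun n => hBm _ _, ?_, ?_, rfl⟩
      · intro a b hab
        have hne : e a ≠ e b := fun h => hab (e.injective h)
        by_cases h1 : (e a).1 = (e b).1
        · have h2 : (e a).2 ≠ (e b).2 := fun h2 => hne (Prod.ext h1 h2)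
          have := hBd (e b).1 h2
          simp only [Function.onFun] at this ⊢
          rw [h1]
          exact this
        · exact Disjoint.mono (hBsub _ _) (hBsub _ _) (hfd h1)
      · ext x
        simp only [Set.mem_iUnion]
        constructor
        · rintro ⟨n, hn⟩
          exact ⟨(e n).1, hBsub _ _ hn⟩
        · rintro ⟨i, hi⟩
          rw [← hBu i] at hi
          obtain ⟨j, hj⟩ := Set.mem_iUnion.mp hi
          exact ⟨e.symm (i, j), by simpa using hj⟩
    calc F (⋃ i, f i) ≤ ∑' n, μs (e n).1 (e n).2 (Bs (e n).1 (e n).2) := sInf_le hmemS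
      _ = ∑' p : ℕ × ℕ, μs p.1 p.2 (Bs p.1 p.2) :=
          e.tsum_eq (fun p : ℕ × ℕ => μs p.1 p.2 (Bs p.1 p.2))
      _ = ∑' i, ∑' j, μs i j (Bs i j) := ENNReal.tsum_prod'
      _ = ∑' i, m i := tsum_congr fun i => (hmsum i).symm
      _ ≤ ∑' i, (F (f i) + δ i) := ENNReal.tsum_le_tsum fun i => (hmlt i).le
      _ = (∑' i, F (f i)) + ∑' i, (δ i : ENNReal) := ENNReal.tsum_add
      _ ≤ (∑' i, F (f i)) + ε := add_le_add_right hδsum.le _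
  -- build the measure
  set ν : Measure X := Measure.ofMeasurable (fun s _ => F s) hF0
    (fun f hfm hfd => le_antisymm (hsub f hfm hfd) (hsuper f hfm hfd)) with hν
  have hνapp : ∀ B : Set X, MeasurableSet B → ν B = F B := fun B hB =>
    Measure.ofMeasurable_apply B hB
  refine ⟨ν, ?_, ?_, ?_, ?_⟩
  · constructor
    rw [hνapp Set.univ MeasurableSet.univ]
    exact hFfin Set.univ MeasurableSet.univ
  · intro B hB
    rw [hνapp B hB]
  · intro ν' hν' B hB
    rw [hνapp B hB]
    exact hle ν' hν' B hB
  · rintro ⟨ν', hν', htight⟩ ε hε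
    obtain ⟨K, hK, hKlt⟩ := htight ε hε
    refine ⟨K, hK, ?_⟩
    rw [hνapp Kᶜ hK.isClosed.measurableSet.compl]
    exact lt_of_le_of_lt (hle ν' hν' Kᶜ hK.isClosed.measurableSet.compl) hKlt
end
end

section
/- Let X be a metric space, k ≥ 0, and let T be a multilinear functional on D^k(X) satisfying the finite mass axiom. Then among all finite Borel measures μ on X satisfying |T(f, π₁, …, π_k)| ≤ (∏_{i=1}^k Lip(π_i)) ∫_X |f| dμ for all (f, π) ∈ D^k(X), there is a minimal one ‖T‖ (namely the infimum ⋀ of this family, defined on a Borel set B as the infimum of Σ_j μ_j(B_j) over countable subfamilies {μ_j} and Borel partitions {B_j} of B); this minimal measure ‖T‖ itself satisfies the bound, and ‖T‖ is tight. -/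
open MeasureTheory Metric Set Filter

noncomputable section

/-- `f : X → ℝ` is Lipschitz. -/
def IsLip {X : Type*} [PseudoMetricSpace X] (f : X → ℝ) : Prop :=
  ∃ K : NNReal, LipschitzWith K f

/-- `f : X → ℝ` is bounded and Lipschitz, i.e. `f ∈ Lip_b(X)`. -/
def IsLipBdd {X : Type*} [PseudoMetricSpace X] (f : X → ℝ) : Prop :=
  IsLip f ∧ ∃ C : ℝ, ∀ x, |f x| ≤ C

/-- The Lipschitz constant of a map. -/
def lipConst {X Y : Type*} [PseudoMetricSpace X] [PseudoMetricSpace Y] (f : X → Y) : NNReal :=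
  sInf {K : NNReal | LipschitzWith K f}

/-- The type carrying (k+1)-multilinear functionals on `D^k(X) = Lip_b(X) × Lip(X)^k`;
a functional is recorded by its values `T f π`. -/
abbrev Func (X : Type*) (k : ℕ) : Type _ := (X → ℝ) → (Fin k → X → ℝ) → ℝ

/-- `(f, π) ∈ D^k(X)`. -/
def InDomain {X : Type*} [PseudoMetricSpace X] {k : ℕ} (f : X → ℝ) (π : Fin k → X → ℝ) : Prop :=
  IsLipBdd f ∧ ∀ i, IsLip (π i)

/-- Two functionals agree as functionals on `D^k(X)`. -/
def DkEq {X : Type*} [PseudoMetricSpace X] {k : ℕ} (T T' : Func X k) : Prop :=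
  ∀ f π, InDomain f π → T f π = T' f π

/-- `T` is multilinear on `D^k(X)`: linear in the `Lip_b`-argument and in each
`Lip`-argument. -/
def IsMultilinear {X : Type*} [PseudoMetricSpace X] {k : ℕ} (T : Func X k) : Prop :=
  (∀ f g π, IsLipBdd f → IsLipBdd g → (∀ i, IsLip (π i)) → T (f + g) π = T f π + T g π) ∧
  (∀ (c : ℝ) f π, IsLipBdd f → (∀ i, IsLip (π i)) → T (c • f) π = c * T f π) ∧
  (∀ f π (i : Fin k) g g', IsLipBdd f → (∀ j, IsLip (π j)) → IsLip g → IsLip g' →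
    T f (Function.update π i (g + g')) =
      T f (Function.update π i g) + T f (Function.update π i g')) ∧
  (∀ f π (i : Fin k) (c : ℝ) g, IsLipBdd f → (∀ j, IsLip (π j)) → IsLip g →
    T f (Function.update π i (c • g)) = c * T f (Function.update π i g))

/-- The mass inequality `|T(f,π)| ≤ ∏ Lip(π_i) ∫ |f| dμ` for all `(f,π) ∈ D^k(X)`. -/
def MassBound {X : Type*} [PseudoMetricSpace X] [MeasurableSpace X] {k : ℕ}
    (T : Func X k) (μ : Measure X) : Prop :=
  ∀ f π, InDomain f π → |T f π| ≤ (∏ i, (lipConst (π i) : ℝ)) * ∫ x, |f x| ∂μ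

/-- The finite mass axiom: some finite *tight* Borel measure dominates `T`. -/
def HasFiniteMass {X : Type*} [PseudoMetricSpace X] [MeasurableSpace X] {k : ℕ}
    (T : Func X k) : Prop :=
  ∃ μ : Measure X, IsFiniteMeasure μ ∧ IsTightMeasure μ ∧ MassBound T μ

/-- `T ∈ D_k(X)`: a multilinear functional on `D^k(X)` with finite mass. -/
def MemDk {X : Type*} [PseudoMetricSpace X] [MeasurableSpace X] {k : ℕ} (T : Func X k) : Prop :=
  IsMultilinear T ∧ HasFiniteMass T

/-- The mass measure `‖T‖`: the minimal finite Borel measure satisfying the mass bound. -/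
def massMeasure {X : Type*} [PseudoMetricSpace X] [MeasurableSpace X] {k : ℕ}
    (T : Func X k) : Measure X :=
  sInf {μ : Measure X | IsFiniteMeasure μ ∧ MassBound T μ}

/-- The support of a measure: points all of whose balls have positive measure. -/
def msupport {X : Type*} [PseudoMetricSpace X] [MeasurableSpace X] (μ : Measure X) : Set X :=
  {x | ∀ r : ℝ, 0 < r → 0 < μ (Metric.ball x r)}

/-- Push-forward of a functional along `φ`. -/
def pushF {X Y : Type*} {k : ℕ} (φ : X → Y) (T : Func X k) : Func Y k :=
  fun f π => T (f ∘ φ) (fun i => π i ∘ φ)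

/-- Restriction `T⌊B` of a functional to a set `B`. -/
def restrF {X : Type*} {k : ℕ} (T : Func X k) (B : Set X) : Func X k :=
  fun f π => T (B.indicator f) π

/-- Locality: `T(f,π) = 0` if some `π_i` is constant on `{f ≠ 0}`. -/
def SatisfiesLocality {X : Type*} [PseudoMetricSpace X] {k : ℕ} (T : Func X k) : Prop :=
  ∀ f π, InDomain f π →
    (∃ i : Fin k, ∀ x ∈ {y | f y ≠ 0}, ∀ x' ∈ {y | f y ≠ 0}, π i x = π i x') → T f π = 0

/-- Continuity: `T(f,π^j) → T(f,π)` if `π_i^j → π_i` pointwise with uniformly bounded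
Lipschitz constants. -/
def SatisfiesContinuity {X : Type*} [PseudoMetricSpace X] {k : ℕ} (T : Func X k) : Prop :=
  ∀ (f : X → ℝ) (πs : ℕ → Fin k → X → ℝ) (π : Fin k → X → ℝ), IsLipBdd f →
    (∃ K : NNReal, ∀ j i, LipschitzWith K (πs j i)) → (∀ i, IsLip (π i)) →
    (∀ i x, Tendsto (fun j => πs j i x) atTop (nhds (π i x))) →
    Tendsto (fun j => T f (πs j)) atTop (nhds (T f π))

/-- A `k`-current: an element of `D_k(X)` satisfying locality and continuity. -/
def IsCurrent {X : Type*} [PseudoMetricSpace X] [MeasurableSpace X] {k : ℕ}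
    (T : Func X k) : Prop :=
  IsMultilinear T ∧ HasFiniteMass T ∧ SatisfiesLocality T ∧ SatisfiesContinuity T

/-- The boundary `∂T (f, π) = T(1, f, π)`. -/
def bdry {X : Type*} {k : ℕ} (T : Func X (k+1)) : Func X k :=
  fun f π => T (fun _ => (1:ℝ)) (Fin.cons f π)

/-- Normality: `∂T` has finite mass (in degree `0` every functional is normal). -/
def IsNormal {X : Type*} [PseudoMetricSpace X] [MeasurableSpace X] :
    ∀ {k : ℕ}, Func X k → Prop
  | 0, _ => True
  | _ + 1, T => HasFiniteMass (bdry T)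

/-- `T ∈ N_k^c(X)`: a normal current with compact support. -/
def MemNkc {X : Type*} [PseudoMetricSpace X] [MeasurableSpace X] {k : ℕ}
    (T : Func X k) : Prop :=
  IsCurrent T ∧ IsNormal T ∧ IsCompact (msupport (massMeasure T))

section Aux
variable {X : Type*} [MetricSpace X]

lemma isLipBdd_mul {f g : X → ℝ} (hf : IsLipBdd f) (hg : IsLipBdd g) :
    IsLipBdd (fun x => f x * g x) := by
  obtain ⟨⟨Kf, hKf⟩, Cf, hCf⟩ := hf
  obtain ⟨⟨Kg, hKg⟩, Cg, hCg⟩ := hg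
  have hCf' : ∀ x, |f x| ≤ max Cf 0 := fun x => (hCf x).trans (le_max_left _ _)
  have hCg' : ∀ x, |g x| ≤ max Cg 0 := fun x => (hCg x).trans (le_max_left _ _)
  refine ⟨⟨(max Cf 0).toNNReal * Kg + (max Cg 0).toNNReal * Kf, ?_⟩, max Cf 0 * max Cg 0, ?_⟩
  · refine LipschitzWith.of_dist_le_mul fun x y => ?_
    have h1 : dist (f x * g x) (f y * g y) ≤ |f x| * dist (g x) (g y) + |g y| * dist (f x) (f y) := by
      rw [Real.dist_eq, Real.dist_eq, Real.dist_eq]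
      calc |f x * g x - f y * g y| = |f x * (g x - g y) + g y * (f x - f y)| := by ring_nf
        _ ≤ |f x * (g x - g y)| + |g y * (f x - f y)| := abs_add_le _ _
        _ = |f x| * |g x - g y| + |g y| * |f x - f y| := by rw [abs_mul, abs_mul]
    have h2 : |f x| * dist (g x) (g y) ≤ max Cf 0 * (Kg * dist x y) :=
      mul_le_mul (hCf' x) (hKg.dist_le_mul x y) dist_nonneg (le_max_right _ _)
    have h3 : |g y| * dist (f x) (f y) ≤ max Cg 0 * (Kf * dist x y) :=
      mul_le_mul (hCg' y) (hKf.dist_le_mul x y) dist_nonneg (le_max_right _ _)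
    have : ((((max Cf 0).toNNReal * Kg + (max Cg 0).toNNReal * Kf) : NNReal) : ℝ)
        = max Cf 0 * Kg + max Cg 0 * Kf := by
      push_cast [Real.coe_toNNReal _ (le_max_right Cf 0), Real.coe_toNNReal _ (le_max_right Cg 0)]
      ring
    rw [this]
    nlinarith [h1, h2, h3]
  · intro x
    rw [abs_mul]
    exact mul_le_mul (hCf' x) (hCg' x) (abs_nonneg _) (le_max_right _ _)

/-- Lipschitz cutoff approximating the indicator of `F` from outside. -/
def cutFun (F : Set X) (n : ℕ) (x : X) : ℝ := max (1 - n * Metric.infDist x F) 0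

lemma cutFun_nonneg (F : Set X) (n : ℕ) (x : X) : 0 ≤ cutFun F n x := le_max_right _ _

lemma cutFun_le_one (F : Set X) (n : ℕ) (x : X) : cutFun F n x ≤ 1 := by
  refine max_le ?_ zero_le_one
  have : (0:ℝ) ≤ n * Metric.infDist x F :=
    mul_nonneg (Nat.cast_nonneg n) Metric.infDist_nonneg
  linarith

lemma cutFun_lipschitz (F : Set X) (n : ℕ) : LipschitzWith n (cutFun F n) := by
  refine LipschitzWith.of_dist_le_mul fun x y => ?_
  rw [Real.dist_eq]
  have key : |cutFun F n x - cutFun F n y| ≤ (n:ℝ) * dist x y := by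
    calc |cutFun F n x - cutFun F n y|
        ≤ |(1 - n * Metric.infDist x F) - (1 - n * Metric.infDist y F)| :=
          abs_max_sub_max_le_abs _ _ _
      _ = (n:ℝ) * |Metric.infDist y F - Metric.infDist x F| := by
          rw [show (1 - n * Metric.infDist x F) - (1 - n * Metric.infDist y F)
              = (n:ℝ) * (Metric.infDist y F - Metric.infDist x F) by ring, abs_mul,
            Nat.abs_cast]
      _ ≤ (n:ℝ) * dist x y := by
          refine mul_le_mul_of_nonneg_left ?_ (Nat.cast_nonneg n)
          rw [← Real.dist_eq, dist_comm]
          simpa using (Metric.lipschitz_infDist_pt F).dist_le_mul x y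
  simpa using key

lemma cutFun_isLipBdd (F : Set X) (n : ℕ) : IsLipBdd (cutFun F n) :=
  ⟨⟨n, cutFun_lipschitz F n⟩, 1, fun x => by
    rw [abs_of_nonneg (cutFun_nonneg F n x)]; exact cutFun_le_one F n x⟩

lemma cutFun_tendsto {F : Set X} (hF : IsClosed F) (hne : F.Nonempty) (x : X) :
    Tendsto (fun n => cutFun F n x) atTop (nhds (F.indicator (fun _ => (1:ℝ)) x)) := by
  by_cases hx : x ∈ F
  · have : ∀ n : ℕ, cutFun F n x = 1 := fun n => by
      simp [cutFun, Metric.infDist_zero_of_mem hx]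
    simp only [this, Set.indicator_of_mem hx]
    exact tendsto_const_nhds
  · have hd : 0 < Metric.infDist x F := (hF.notMem_iff_infDist_pos hne).mp hx
    rw [Set.indicator_of_notMem hx]
    refine tendsto_const_nhds.congr' ?_
    filter_upwards [eventually_ge_atTop ⌈(Metric.infDist x F)⁻¹⌉₊] with n hn
    have h1 : (Metric.infDist x F)⁻¹ ≤ (n:ℝ) := le_trans (Nat.le_ceil _) (Nat.cast_le.mpr hn)
    have h2 : (1:ℝ) ≤ n * Metric.infDist x F := by
      rw [inv_le_iff_one_le_mul₀ hd] at h1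
      linarith [h1]
    simp only [cutFun]
    rw [max_eq_right (by linarith)]

end Aux

section Main
variable {X : Type*} [MetricSpace X] [MeasurableSpace X] [BorelSpace X] {k : ℕ} {T : Func X k}

lemma integrable_bdd {f : X → ℝ} {C : ℝ} (hc : Continuous f) (hC : ∀ x, |f x| ≤ C)
    (μ : Measure X) [IsFiniteMeasure μ] : Integrable f μ :=
  ⟨hc.aestronglyMeasurable,
    HasFiniteIntegral.of_bounded (C := C) (ae_of_all _ fun x => by
      simpa [Real.norm_eq_abs] using hC x)⟩

lemma isLipBdd_one_sub {g : X → ℝ} (hg0 : ∀ x, 0 ≤ g x) (hg1 : ∀ x, g x ≤ 1)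
    {K : NNReal} (hK : LipschitzWith K g) : IsLipBdd (fun x => 1 - g x) :=
  ⟨⟨0 + K, (LipschitzWith.const (1:ℝ)).sub hK⟩, 1, fun x => by
    show |1 - g x| ≤ 1
    rw [abs_le]; constructor <;> [linarith [hg1 x]; linarith [hg0 x]]⟩

lemma key_ineq (hmul : IsMultilinear T) {μ1 μ2 : Measure X}
    [IsFiniteMeasure μ1] [IsFiniteMeasure μ2]
    (h1 : MassBound T μ1) (h2 : MassBound T μ2) {F : Set X} (hF : IsClosed F)
    {f : X → ℝ} {π : Fin k → X → ℝ} (hfπ : InDomain f π) :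
    |T f π| ≤ (∏ i, (lipConst (π i) : ℝ)) *
      ((∫ x in F, |f x| ∂μ1) + ∫ x in Fᶜ, |f x| ∂μ2) := by
  rcases F.eq_empty_or_nonempty with rfl | hne
  · simpa using h2 f π hfπ
  set P := ∏ i, (lipConst (π i) : ℝ) with hPdef
  obtain ⟨⟨Kf, hKf⟩, Cf0, hCf0⟩ := hfπ.1
  set C := max Cf0 0 with hCdef
  have hC : ∀ x, |f x| ≤ C := fun x => (hCf0 x).trans (le_max_left _ _)
  have hfc : Continuous f := hKf.continuous
  have hg : ∀ n : ℕ, IsLipBdd (fun x => f x * cutFun F n x) :=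
    fun n => isLipBdd_mul hfπ.1 (cutFun_isLipBdd F n)
  have honelip : ∀ n : ℕ, IsLipBdd (fun x : X => 1 - cutFun F n x) := fun n =>
    isLipBdd_one_sub (cutFun_nonneg F n) (cutFun_le_one F n) (cutFun_lipschitz F n)
  have hh : ∀ n : ℕ, IsLipBdd (fun x => f x * (1 - cutFun F n x)) :=
    fun n => isLipBdd_mul hfπ.1 (honelip n)
  have step : ∀ n : ℕ, |T f π| ≤
      P * ((∫ x, |f x * cutFun F n x| ∂μ1) + ∫ x, |f x * (1 - cutFun F n x)| ∂μ2) := by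
    intro n
    have hgd : InDomain (fun x => f x * cutFun F n x) π := ⟨hg n, hfπ.2⟩
    have hhd : InDomain (fun x => f x * (1 - cutFun F n x)) π := ⟨hh n, hfπ.2⟩
    have hsplit : T f π = T (fun x => f x * cutFun F n x) π
        + T (fun x => f x * (1 - cutFun F n x)) π := by
      rw [← hmul.1 _ _ π (hg n) (hh n) hfπ.2]
      congr 1
      funext x
      show f x = f x * cutFun F n x + f x * (1 - cutFun F n x)
      ring
    rw [hsplit]
    calc |T (fun x => f x * cutFun F n x) π + T (fun x => f x * (1 - cutFun F n x)) π|
        ≤ |T (fun x => f x * cutFun F n x) π| + |T (fun x => f x * (1 - cutFun F n x)) π| :=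
          abs_add_le _ _
      _ ≤ P * (∫ x, |f x * cutFun F n x| ∂μ1) + P * ∫ x, |f x * (1 - cutFun F n x)| ∂μ2 :=
          add_le_add (h1 _ _ hgd) (h2 _ _ hhd)
      _ = P * ((∫ x, |f x * cutFun F n x| ∂μ1) + ∫ x, |f x * (1 - cutFun F n x)| ∂μ2) := by ring
  have habs1 : ∀ x : X, |f x * F.indicator (fun _ => (1:ℝ)) x| = F.indicator (fun y => |f y|) x := by
    intro x
    by_cases hx : x ∈ F <;> simp [Set.indicator_of_mem, Set.indicator_of_notMem, hx]
  have habs2 : ∀ x : X, |f x * (1 - F.indicator (fun _ => (1:ℝ)) x)| = Fᶜ.indicator (fun y => |f y|) x := by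
    intro x
    by_cases hx : x ∈ F <;>
      simp [Set.indicator_of_mem, Set.indicator_of_notMem, hx, Set.mem_compl_iff]
  have lim1 : Tendsto (fun n => ∫ x, |f x * cutFun F n x| ∂μ1) atTop
      (nhds (∫ x in F, |f x| ∂μ1)) := by
    rw [← integral_indicator hF.measurableSet]
    refine tendsto_integral_of_dominated_convergence (fun _ => C)
      (fun n => (Continuous.abs (hfc.mul (cutFun_lipschitz F n).continuous)).aestronglyMeasurable)
      (integrable_const C) (fun n => ae_of_all _ fun x => ?_) (ae_of_all _ fun x => ?_)
    · rw [Real.norm_eq_abs, abs_abs, abs_mul]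
      calc |f x| * |cutFun F n x| ≤ C * 1 := by
            refine mul_le_mul (hC x) ?_ (abs_nonneg _) (le_trans (abs_nonneg _) (hC x))
            rw [abs_of_nonneg (cutFun_nonneg F n x)]; exact cutFun_le_one F n x
        _ = C := mul_one C
    · rw [← habs1 x]
      exact (Tendsto.const_mul (f x) (cutFun_tendsto hF hne x)).abs
  have lim2 : Tendsto (fun n => ∫ x, |f x * (1 - cutFun F n x)| ∂μ2) atTop
      (nhds (∫ x in Fᶜ, |f x| ∂μ2)) := by
    rw [← integral_indicator hF.measurableSet.compl]
    refine tendsto_integral_of_dominated_convergence (fun _ => 2 * C)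
      (fun n => (Continuous.abs (hfc.mul (continuous_const.sub
        (cutFun_lipschitz F n).continuous))).aestronglyMeasurable)
      (integrable_const _) (fun n => ae_of_all _ fun x => ?_) (ae_of_all _ fun x => ?_)
    · rw [Real.norm_eq_abs, abs_abs, abs_mul]
      have h0 := cutFun_nonneg F n x
      have h1' := cutFun_le_one F n x
      have : |1 - cutFun F n x| ≤ 2 := by rw [abs_le]; constructor <;> linarith
      calc |f x| * |1 - cutFun F n x| ≤ C * 2 :=
            mul_le_mul (hC x) this (abs_nonneg _) (le_trans (abs_nonneg _) (hC x))
        _ = 2 * C := by ring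
    · rw [← habs2 x]
      exact (Tendsto.const_mul (f x)
        ((tendsto_const_nhds.sub (cutFun_tendsto hF hne x)))).abs
  exact ge_of_tendsto (Tendsto.const_mul P (lim1.add lim2)) (Eventually.of_forall step)

lemma glue2 (hmul : IsMultilinear T) {μ1 μ2 : Measure X}
    (h1f : IsFiniteMeasure μ1) (h1 : MassBound T μ1)
    (h2f : IsFiniteMeasure μ2) (h2 : MassBound T μ2)
    {B : Set X} (hB : MeasurableSet B) :
    IsFiniteMeasure (μ1.restrict B + μ2.restrict Bᶜ) ∧
      MassBound T (μ1.restrict B + μ2.restrict Bᶜ) := by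
  haveI := h1f; haveI := h2f
  constructor
  · infer_instance
  intro f π hfπ
  obtain ⟨⟨Kf, hKf⟩, Cf0, hCf0⟩ := id hfπ.1
  set C := max Cf0 0 with hCdef
  have hC : ∀ x, |f x| ≤ C := fun x => (hCf0 x).trans (le_max_left _ _)
  have hC0 : (0:ℝ) ≤ C := le_max_right _ _
  have hfc : Continuous f := hKf.continuous
  set P := ∏ i, (lipConst (π i) : ℝ) with hPdef
  have hP : 0 ≤ P := Finset.prod_nonneg fun i _ => (lipConst (π i)).2
  have hint : ∀ (μ : Measure X) [IsFiniteMeasure μ], Integrable (fun x => |f x|) μ :=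
    fun μ _ => integrable_bdd (C := C) hfc.abs (fun x => by rw [abs_abs]; exact hC x) μ
  have main : ∀ ε : ℝ, 0 < ε →
      |T f π| ≤ P * (∫ x, |f x| ∂(μ1.restrict B + μ2.restrict Bᶜ)) + P * C * ε := by
    intro ε hε
    obtain ⟨F, hFB, hFcl, hFlt⟩ := hB.exists_isClosed_lt_add (μ := μ1 + μ2)
      (measure_ne_top _ _) (ε := ENNReal.ofReal ε) (ENNReal.ofReal_pos.mpr hε).ne'
    have hdiff : μ2 (B \ F) < ENNReal.ofReal ε := by
      have h1' : (μ1 + μ2) (B \ F) < ENNReal.ofReal ε := by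
        have := measure_diff_lt_of_lt_add (μ := μ1 + μ2) hFcl.measurableSet.nullMeasurableSet
          hFB (measure_ne_top _ _) hFlt
        exact this
      calc μ2 (B \ F) ≤ (μ1 + μ2) (B \ F) := by
            simp [Measure.add_apply]
        _ < ENNReal.ofReal ε := h1'
    have hkey := key_ineq hmul h1 h2 hFcl hfπ
    have e1 : (∫ x in F, |f x| ∂μ1) ≤ ∫ x in B, |f x| ∂μ1 :=
      setIntegral_mono_set ((hint μ1).integrableOn)
        (ae_of_all _ fun x => abs_nonneg _) (HasSubset.Subset.eventuallyLE hFB)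
    have hFc_eq : Fᶜ = (B \ F) ∪ Bᶜ := by
      ext x
      constructor
      · intro hx
        by_cases hxB : x ∈ B
        · exact Or.inl ⟨hxB, hx⟩
        · exact Or.inr hxB
      · rintro (⟨-, hx⟩ | hx)
        · exact hx
        · exact fun h => hx (hFB h)
    have e2 : (∫ x in Fᶜ, |f x| ∂μ2)
        = (∫ x in B \ F, |f x| ∂μ2) + ∫ x in Bᶜ, |f x| ∂μ2 := by
      rw [hFc_eq]
      exact setIntegral_union (disjoint_compl_right.mono_left diff_subset) hB.compl
        ((hint μ2).integrableOn) ((hint μ2).integrableOn)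
    have e3 : (∫ x in B \ F, |f x| ∂μ2) ≤ C * ε := by
      haveI : IsFiniteMeasure (μ2.restrict (B \ F)) :=
        ⟨by rw [Measure.restrict_apply_univ]; exact measure_lt_top _ _⟩
      have hb := norm_integral_le_of_norm_le_const (μ := μ2.restrict (B \ F))
        (f := fun x => |f x|) (C := C) (ae_of_all _ fun x => by
          rw [Real.norm_eq_abs, abs_abs]; exact hC x)
      have : (∫ x in B \ F, |f x| ∂μ2) ≤ C * ((μ2.restrict (B \ F)) univ).toReal :=
        le_trans (le_abs_self _) (by rwa [Real.norm_eq_abs] at hb)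
      refine this.trans ?_
      rw [Measure.restrict_apply_univ]
      refine mul_le_mul_of_nonneg_left ?_ hC0
      have := (ENNReal.toReal_le_toReal (measure_ne_top _ _) ENNReal.ofReal_ne_top).mpr hdiff.le
      rwa [ENNReal.toReal_ofReal hε.le] at this
    have e4 : (∫ x, |f x| ∂(μ1.restrict B + μ2.restrict Bᶜ))
        = (∫ x in B, |f x| ∂μ1) + ∫ x in Bᶜ, |f x| ∂μ2 := by
      haveI : IsFiniteMeasure (μ1.restrict B) :=
        ⟨by rw [Measure.restrict_apply_univ]; exact measure_lt_top _ _⟩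
      haveI : IsFiniteMeasure (μ2.restrict Bᶜ) :=
        ⟨by rw [Measure.restrict_apply_univ]; exact measure_lt_top _ _⟩
      exact integral_add_measure ((hint _)) ((hint _))
    calc |T f π| ≤ P * ((∫ x in F, |f x| ∂μ1) + ∫ x in Fᶜ, |f x| ∂μ2) := hkey
      _ ≤ P * ((∫ x in B, |f x| ∂μ1) + ((∫ x in Bᶜ, |f x| ∂μ2) + C * ε)) := by
          refine mul_le_mul_of_nonneg_left ?_ hP
          rw [e2]
          linarith [e1, e3]
      _ = P * (∫ x, |f x| ∂(μ1.restrict B + μ2.restrict Bᶜ)) + P * C * ε := by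
          rw [e4]; ring
  by_cases hPC : P * C = 0
  · have := main 1 one_pos
    rw [hPC] at this
    simpa using this
  · have hPC' : 0 < P * C := lt_of_le_of_ne (mul_nonneg hP hC0) (Ne.symm hPC)
    refine le_of_forall_pos_le_add fun δ hδ => ?_
    have := main (δ / (P * C)) (div_pos hδ hPC')
    calc |T f π| ≤ P * (∫ x, |f x| ∂(μ1.restrict B + μ2.restrict Bᶜ)) + P * C * (δ / (P * C)) :=
          this
      _ = P * (∫ x, |f x| ∂(μ1.restrict B + μ2.restrict Bᶜ)) + δ := by
          rw [← mul_div_assoc, mul_div_cancel_left₀ δ hPC]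
      _ ≤ _ := le_refl _

lemma glueFin (hmul : IsMultilinear T) (μ0 : Measure X)
    (h0 : IsFiniteMeasure μ0 ∧ MassBound T μ0)
    (μs : ℕ → Measure X) (hμs : ∀ j, IsFiniteMeasure (μs j) ∧ MassBound T (μs j))
    (Bs : ℕ → Set X) (hBs : ∀ j, MeasurableSet (Bs j))
    (hdisj : Pairwise (Function.onFun Disjoint Bs)) (N : ℕ) :
    IsFiniteMeasure ((∑ j ∈ Finset.range N, (μs j).restrict (Bs j))
        + μ0.restrict (⋃ j < N, Bs j)ᶜ) ∧
      MassBound T ((∑ j ∈ Finset.range N, (μs j).restrict (Bs j))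
        + μ0.restrict (⋃ j < N, Bs j)ᶜ) := by
  induction N with
  | zero =>
      have : ((∑ j ∈ Finset.range 0, (μs j).restrict (Bs j))
          + μ0.restrict (⋃ j < 0, Bs j)ᶜ) = μ0 := by
        simp [Nat.not_lt_zero]
      rw [this]; exact h0
  | succ N ih =>
      have hEq : ((∑ j ∈ Finset.range (N+1), (μs j).restrict (Bs j))
            + μ0.restrict (⋃ j < N+1, Bs j)ᶜ)
          = (μs N).restrict (Bs N)
            + ((∑ j ∈ Finset.range N, (μs j).restrict (Bs j))
                + μ0.restrict (⋃ j < N, Bs j)ᶜ).restrict (Bs N)ᶜ := by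
        ext s hs
        have hc : MeasurableSet ((Bs N)ᶜ) := (hBs N).compl
        simp only [Measure.add_apply, Measure.restrict_apply hs, Measure.coe_add, Pi.add_apply,
          Measure.finset_sum_apply, Measure.restrict_apply (hs.inter hc)]
        have e1 : ∀ j ∈ Finset.range N, μs j (s ∩ (Bs N)ᶜ ∩ Bs j) = μs j (s ∩ Bs j) := by
          intro j hj
          congr 1
          have hsub : Bs j ⊆ (Bs N)ᶜ := fun x hx hxN =>
            (Set.disjoint_left.mp (hdisj (Nat.ne_of_lt (Finset.mem_range.mp hj)))) hx hxN
          ext x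
          simp only [Set.mem_inter_iff, Set.mem_compl_iff]
          exact ⟨fun ⟨⟨h1', _⟩, h3⟩ => ⟨h1', h3⟩, fun ⟨h1', h3⟩ => ⟨⟨h1', hsub h3⟩, h3⟩⟩
        have e2 : s ∩ (Bs N)ᶜ ∩ (⋃ j < N, Bs j)ᶜ = s ∩ (⋃ j < N+1, Bs j)ᶜ := by
          rw [Set.biUnion_lt_succ, Set.compl_union]
          ext x
          simp only [Set.mem_inter_iff, Set.mem_compl_iff]
          tauto
        rw [Finset.sum_congr rfl e1, e2, Finset.sum_range_succ]
        ring
      rw [hEq]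
      exact glue2 hmul (hμs N).1 (hμs N).2 ih.1 ih.2 (hBs N)

lemma glueCount (hmul : IsMultilinear T)
    (μs : ℕ → Measure X) (hμs : ∀ j, IsFiniteMeasure (μs j) ∧ MassBound T (μs j))
    (Bs : ℕ → Set X) (hBs : ∀ j, MeasurableSet (Bs j))
    (hdisj : Pairwise (Function.onFun Disjoint Bs))
    (hcov : (⋃ j, Bs j) = Set.univ) (hfin : (∑' j, μs j (Bs j)) ≠ ⊤) :
    IsFiniteMeasure (Measure.sum fun j => (μs j).restrict (Bs j)) ∧
      MassBound T (Measure.sum fun j => (μs j).restrict (Bs j)) := by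
  set lm := Measure.sum fun j => (μs j).restrict (Bs j) with hlm
  have hlmuniv : lm univ = ∑' j, μs j (Bs j) := by
    rw [hlm, Measure.sum_apply _ MeasurableSet.univ]
    congr 1; funext j; rw [Measure.restrict_apply_univ]
  have hfinm : IsFiniteMeasure lm := ⟨by rw [hlmuniv]; exact lt_top_iff_ne_top.mpr hfin⟩
  refine ⟨hfinm, ?_⟩
  haveI := hfinm
  intro f π hfπ
  obtain ⟨⟨Kf, hKf⟩, Cf0, hCf0⟩ := id hfπ.1
  set C := max Cf0 0 with hCdef
  have hC : ∀ x, |f x| ≤ C := fun x => (hCf0 x).trans (le_max_left _ _)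
  have hC0 : (0:ℝ) ≤ C := le_max_right _ _
  have hfc : Continuous f := hKf.continuous
  set P := ∏ i, (lipConst (π i) : ℝ) with hPdef
  have hP : 0 ≤ P := Finset.prod_nonneg fun i _ => (lipConst (π i)).2
  have hint : ∀ (μ : Measure X) [IsFiniteMeasure μ], Integrable (fun x => |f x|) μ :=
    fun μ _ => integrable_bdd (C := C) hfc.abs (fun x => by rw [abs_abs]; exact hC x) μ
  haveI := (hμs 0).1
  haveI : ∀ j, IsFiniteMeasure (μs j) := fun j => (hμs j).1
  haveI : ∀ j, IsFiniteMeasure ((μs j).restrict (Bs j)) := fun j =>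
    ⟨by rw [Measure.restrict_apply_univ]; exact measure_lt_top _ _⟩
  -- the remainder tends to zero
  have hmono : Antitone (fun N : ℕ => (⋃ j < N, Bs j)ᶜ) := by
    intro a b hab
    exact Set.compl_subset_compl.mpr
      (Set.iUnion₂_subset fun j hj => Set.subset_biUnion_of_mem (lt_of_lt_of_le hj hab))
  have hiInter : (⋂ N : ℕ, (⋃ j < N, Bs j)ᶜ) = ∅ := by
    rw [← Set.compl_iUnion]
    have : (⋃ N : ℕ, ⋃ j < N, Bs j) = ⋃ j, Bs j := by
      apply Set.Subset.antisymm
      · exact Set.iUnion_subset fun N => Set.iUnion₂_subset fun j _ => Set.subset_iUnion _ j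
      · exact Set.iUnion_subset fun j =>
          Set.subset_iUnion_of_subset (j+1) (Set.subset_biUnion_of_mem (Nat.lt_succ_self j))
    rw [this, hcov, Set.compl_univ]
  have hR : Tendsto (fun N : ℕ => μs 0 ((⋃ j < N, Bs j)ᶜ)) atTop (nhds 0) := by
    have := tendsto_measure_iInter_atTop (μ := μs 0)
      (s := fun N : ℕ => (⋃ j < N, Bs j)ᶜ)
      (fun N => ((MeasurableSet.biUnion (Set.to_countable _)
        (fun j _ => hBs j)).compl).nullMeasurableSet)
      hmono ⟨0, measure_ne_top _ _⟩
    rwa [hiInter, measure_empty] at this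
  have hRreal : Tendsto (fun N : ℕ => (μs 0 ((⋃ j < N, Bs j)ᶜ)).toReal) atTop (nhds 0) := by
    have h0 : ((0:ENNReal)).toReal = 0 := rfl
    rw [← h0]
    exact (ENNReal.tendsto_toReal (by simp)).comp hR
  -- per-N bound
  have step : ∀ N : ℕ, |T f π| ≤
      P * ((∫ x, |f x| ∂lm) + C * (μs 0 ((⋃ j < N, Bs j)ᶜ)).toReal) := by
    intro N
    have hg := glueFin hmul (μs 0) (hμs 0) μs hμs Bs hBs hdisj N
    haveI := hg.1
    have hbound := hg.2 f π hfπ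
    -- decompose the integral
    haveI : IsFiniteMeasure ((μs 0).restrict (⋃ j < N, Bs j)ᶜ) :=
      ⟨by rw [Measure.restrict_apply_univ]; exact measure_lt_top _ _⟩
    haveI : IsFiniteMeasure (∑ j ∈ Finset.range N, (μs j).restrict (Bs j)) := by
      constructor
      rw [Measure.finset_sum_apply]
      exact ENNReal.sum_lt_top.mpr fun j _ => measure_lt_top _ _
    have hdecomp : (∫ x, |f x| ∂((∑ j ∈ Finset.range N, (μs j).restrict (Bs j))
          + (μs 0).restrict (⋃ j < N, Bs j)ᶜ))
        = (∫ x, |f x| ∂(∑ j ∈ Finset.range N, (μs j).restrict (Bs j)))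
          + ∫ x, |f x| ∂((μs 0).restrict (⋃ j < N, Bs j)ᶜ) :=
      integral_add_measure (hint _) (hint _)
    have hle1 : (∫ x, |f x| ∂(∑ j ∈ Finset.range N, (μs j).restrict (Bs j)))
        ≤ ∫ x, |f x| ∂lm := by
      refine integral_mono_measure ?_ (ae_of_all _ fun x => abs_nonneg _) (hint _)
      intro s
      rw [hlm]
      rw [Measure.finset_sum_apply]
      calc ∑ j ∈ Finset.range N, (μs j).restrict (Bs j) s
          ≤ ∑' j, ((μs j).restrict (Bs j)) s := ENNReal.sum_le_tsum (Finset.range N)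
        _ = (Measure.sum fun j => (μs j).restrict (Bs j)) s := by
            rw [Measure.sum_apply_of_countable]
    have hle2 : (∫ x, |f x| ∂((μs 0).restrict (⋃ j < N, Bs j)ᶜ))
        ≤ C * (μs 0 ((⋃ j < N, Bs j)ᶜ)).toReal := by
      have hb := norm_integral_le_of_norm_le_const
        (μ := (μs 0).restrict (⋃ j < N, Bs j)ᶜ)
        (f := fun x => |f x|) (C := C) (ae_of_all _ fun x => by
          rw [Real.norm_eq_abs, abs_abs]; exact hC x)
      rw [measureReal_def, Measure.restrict_apply_univ] at hb
      exact le_trans (le_abs_self _) (by rwa [Real.norm_eq_abs] at hb)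
    calc |T f π| ≤ P * ∫ x, |f x| ∂((∑ j ∈ Finset.range N, (μs j).restrict (Bs j))
          + (μs 0).restrict (⋃ j < N, Bs j)ᶜ) := hbound
      _ ≤ P * ((∫ x, |f x| ∂lm) + C * (μs 0 ((⋃ j < N, Bs j)ᶜ)).toReal) := by
          refine mul_le_mul_of_nonneg_left ?_ hP
          rw [hdecomp]
          exact add_le_add hle1 hle2
  have htt : Tendsto (fun N : ℕ => (∫ x, |f x| ∂lm) + C * (μs 0 ((⋃ j < N, Bs j)ᶜ)).toReal)
      atTop (nhds ((∫ x, |f x| ∂lm) + C * 0)) :=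
    tendsto_const_nhds.add (hRreal.const_mul C)
  rw [mul_zero, add_zero] at htt
  exact ge_of_tendsto (htt.const_mul P) (Eventually.of_forall step)

theorem massMeasureExistsMinimalAux (T : Func X k) (hmul : IsMultilinear T)
    (hT : HasFiniteMass T) :
    ∃ ν : Measure X, IsFiniteMeasure ν ∧ MassBound T ν ∧ IsTightMeasure ν ∧
      (∀ μ : Measure X, IsFiniteMeasure μ → MassBound T μ →
        ∀ B : Set X, MeasurableSet B → ν B ≤ μ B) ∧
      (∀ B : Set X, MeasurableSet B →
        ν B = sInf {m : ENNReal | ∃ (μs : ℕ → Measure X) (Bs : ℕ → Set X),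
          (∀ j, IsFiniteMeasure (μs j) ∧ MassBound T (μs j)) ∧
          (∀ j, MeasurableSet (Bs j)) ∧ Pairwise (Function.onFun Disjoint Bs) ∧
          (⋃ j, Bs j) = B ∧ m = ∑' j, μs j (Bs j)}) := by
  obtain ⟨μ0, hμ0fin, hμ0tight, hμ0mb⟩ := hT
  haveI := hμ0fin
  set S := {μ : Measure X | IsFiniteMeasure μ ∧ MassBound T μ} with hS
  have hμ0S : μ0 ∈ S := ⟨hμ0fin, hμ0mb⟩
  have hSne : S.Nonempty := ⟨μ0, hμ0S⟩
  set ν := sInf S with hν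
  have hνle : ∀ μ ∈ S, ν ≤ μ := fun μ hμ => sInf_le hμ
  have hνle0 : ∀ s : Set X, ν s ≤ μ0 s := fun s => Measure.le_iff'.mp (hνle μ0 hμ0S) s
  haveI hνfin : IsFiniteMeasure ν := ⟨lt_of_le_of_lt (hνle0 univ) (measure_lt_top _ _)⟩
  -- the approximation lemma
  have approx : ∀ (B : Set X), MeasurableSet B → ∀ ε : ENNReal, 0 < ε → ε ≠ ⊤ →
      ∃ (μs : ℕ → Measure X) (Bs : ℕ → Set X),
        (∀ j, μs j ∈ S) ∧ (∀ j, MeasurableSet (Bs j)) ∧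
        Pairwise (Function.onFun Disjoint Bs) ∧ (⋃ j, Bs j) = B ∧
        (∑' j, μs j (Bs j)) ≤ ν B + 3 * ε := by
    intro B hB ε hε hεtop
    have hνB : ν B = ⨅ (t : ℕ → Set X) (_ : B ⊆ ⋃ n, t n),
        ∑' n, ⨅ (μ : Measure X) (_ : μ ∈ S), μ (t n) := by
      rw [hν, Measure.sInf_apply hB, OuterMeasure.sInf_apply (hSne.image _)]
      congr 1
      funext t
      congr 1
      funext ht
      congr 1
      funext n
      rw [iInf_image]
      simp only [Measure.coe_toOuterMeasure]
    have hlt : (⨅ (t : ℕ → Set X) (_ : B ⊆ ⋃ n, t n),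
        ∑' n, ⨅ (μ : Measure X) (_ : μ ∈ S), μ (t n)) < ν B + ε := by
      rw [← hνB]
      exact ENNReal.lt_add_right (measure_ne_top _ _) hε.ne'
    obtain ⟨t, hlt2⟩ := iInf_lt_iff.mp hlt
    obtain ⟨ht, hlt3⟩ := iInf_lt_iff.mp hlt2
    -- choose near-optimal measures
    have hchoice : ∀ n : ℕ, ∃ μ ∈ S, μ (t n) ≤
        (⨅ (μ : Measure X) (_ : μ ∈ S), μ (t n)) + ε * (2:ENNReal)⁻¹ ^ n := by
      intro n
      have hIne : (⨅ (μ : Measure X) (_ : μ ∈ S), μ (t n)) ≠ ⊤ :=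
        ne_top_of_le_ne_top (measure_ne_top μ0 _) (iInf₂_le μ0 hμ0S)
      have hδ : (ε * (2:ENNReal)⁻¹ ^ n) ≠ 0 := by
        refine mul_ne_zero hε.ne' ?_
        simp [pow_eq_zero_iff]
      have : (⨅ (μ : Measure X) (_ : μ ∈ S), μ (t n)) <
          (⨅ (μ : Measure X) (_ : μ ∈ S), μ (t n)) + ε * (2:ENNReal)⁻¹ ^ n :=
        ENNReal.lt_add_right hIne hδ
      obtain ⟨μ, hμlt⟩ := iInf_lt_iff.mp this
      obtain ⟨hμS, hμlt2⟩ := iInf_lt_iff.mp hμlt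
      exact ⟨μ, hμS, hμlt2.le⟩
    choose μs hμsS hμslt using hchoice
    set t' : ℕ → Set X := fun n => toMeasurable (μs n) (t n) with ht'
    have ht'meas : ∀ n, MeasurableSet (t' n) := fun n => measurableSet_toMeasurable _ _
    set Bs : ℕ → Set X := fun n => B ∩ disjointed t' n with hBsdef
    have hBsmeas : ∀ n, MeasurableSet (Bs n) := fun n =>
      hB.inter (MeasurableSet.disjointed ht'meas n)
    have hBsdisj : Pairwise (Function.onFun Disjoint Bs) := fun i j hij =>
      ((disjoint_disjointed t') hij).mono Set.inter_subset_right Set.inter_subset_right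
    have hBscov : (⋃ j, Bs j) = B := by
      rw [hBsdef, ← Set.inter_iUnion, iUnion_disjointed]
      refine Set.inter_eq_left.mpr ?_
      exact ht.trans (Set.iUnion_mono fun n => subset_toMeasurable _ _)
    refine ⟨μs, Bs, hμsS, hBsmeas, hBsdisj, hBscov, ?_⟩
    have hterm : ∀ n, μs n (Bs n) ≤
        (⨅ (μ : Measure X) (_ : μ ∈ S), μ (t n)) + ε * (2:ENNReal)⁻¹ ^ n := by
      intro n
      have hsub : Bs n ⊆ t' n := (Set.inter_subset_right).trans (disjointed_subset t' n)
      calc μs n (Bs n) ≤ μs n (t' n) := measure_mono hsub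
        _ = μs n (t n) := measure_toMeasurable _
        _ ≤ _ := hμslt n
    calc (∑' j, μs j (Bs j))
        ≤ ∑' n, ((⨅ (μ : Measure X) (_ : μ ∈ S), μ (t n)) + ε * (2:ENNReal)⁻¹ ^ n) :=
          ENNReal.tsum_le_tsum hterm
      _ = (∑' n, ⨅ (μ : Measure X) (_ : μ ∈ S), μ (t n)) + ε * ∑' n, (2:ENNReal)⁻¹ ^ n := by
          rw [ENNReal.tsum_add, ENNReal.tsum_mul_left]
      _ ≤ (ν B + ε) + ε * 2 := by
          refine add_le_add hlt3.le ?_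
          refine mul_le_mul_right ?_ ε
          rw [ENNReal.tsum_geometric]
          rw [ENNReal.one_sub_inv_two, inv_inv]
      _ = ν B + 3 * ε := by ring
  -- the formula
  have formula : ∀ B : Set X, MeasurableSet B →
      ν B = sInf {m : ENNReal | ∃ (μs : ℕ → Measure X) (Bs : ℕ → Set X),
        (∀ j, IsFiniteMeasure (μs j) ∧ MassBound T (μs j)) ∧
        (∀ j, MeasurableSet (Bs j)) ∧ Pairwise (Function.onFun Disjoint Bs) ∧
        (⋃ j, Bs j) = B ∧ m = ∑' j, μs j (Bs j)} := by
    intro B hB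
    apply le_antisymm
    · refine le_sInf ?_
      rintro m ⟨μs, Bs, h1, h2, h3, h4, rfl⟩
      calc ν B = ν (⋃ j, Bs j) := by rw [h4]
        _ = ∑' j, ν (Bs j) := measure_iUnion h3 h2
        _ ≤ ∑' j, μs j (Bs j) :=
            ENNReal.tsum_le_tsum fun j => Measure.le_iff'.mp (hνle _ ⟨(h1 j).1, (h1 j).2⟩) _
    · refine ENNReal.le_of_forall_pos_le_add fun ε hε _ => ?_
      have hε3 : (0:ENNReal) < (ε : ENNReal) / 3 :=
        ENNReal.div_pos (by exact_mod_cast hε.ne') (by norm_num)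
      have hε3top : ((ε : ENNReal) / 3) ≠ ⊤ := by
        exact (ENNReal.div_lt_top ENNReal.coe_ne_top (by norm_num)).ne
      obtain ⟨μs, Bs, h1, h2, h3, h4, h5⟩ := approx B hB ((ε : ENNReal) / 3) hε3 hε3top
      refine le_trans (sInf_le ⟨μs, Bs, fun j => h1 j, h2, h3, h4, rfl⟩) ?_
      refine h5.trans ?_
      rw [ENNReal.mul_div_cancel' (by norm_num) (by norm_num)]
  -- mass bound for ν
  have hmb : MassBound T ν := by
    intro f π hfπ
    obtain ⟨⟨Kf, hKf⟩, Cf0, hCf0⟩ := id hfπ.1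
    set C := max Cf0 0 with hCdef
    have hC : ∀ x, |f x| ≤ C := fun x => (hCf0 x).trans (le_max_left _ _)
    have hC0 : (0:ℝ) ≤ C := le_max_right _ _
    have hfc : Continuous f := hKf.continuous
    set P := ∏ i, (lipConst (π i) : ℝ) with hPdef
    have hP : 0 ≤ P := Finset.prod_nonneg fun i _ => (lipConst (π i)).2
    have hint : ∀ (μ : Measure X) [IsFiniteMeasure μ], Integrable (fun x => |f x|) μ :=
      fun μ _ => integrable_bdd (C := C) hfc.abs (fun x => by rw [abs_abs]; exact hC x) μ
    have main : ∀ ε : ℝ, 0 < ε → |T f π| ≤ P * (∫ x, |f x| ∂ν) + P * C * ε := by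
      intro ε hε
      have hε3 : (0:ENNReal) < ENNReal.ofReal (ε / 3) := ENNReal.ofReal_pos.mpr (by linarith)
      obtain ⟨μs, Bs, h1, h2, h3, h4, h5⟩ := approx univ MeasurableSet.univ
        (ENNReal.ofReal (ε / 3)) hε3 ENNReal.ofReal_ne_top
      have h5' : (∑' j, μs j (Bs j)) ≤ ν univ + ENNReal.ofReal ε := by
        refine h5.trans ?_
        refine add_le_add_right ?_ _
        rw [← ENNReal.ofReal_ofNat, ← ENNReal.ofReal_mul (by norm_num)]
        exact ENNReal.ofReal_le_ofReal (le_of_eq (by ring))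
      have hsumfin : (∑' j, μs j (Bs j)) ≠ ⊤ :=
        ne_top_of_le_ne_top (by simp [measure_ne_top]) h5'
      have hglue := glueCount hmul μs h1 Bs h2 h3 h4 hsumfin
      haveI := hglue.1
      set lm := Measure.sum fun j => (μs j).restrict (Bs j) with hlmdef
      have hlmS : lm ∈ S := ⟨hglue.1, hglue.2⟩
      have hνlm : ν ≤ lm := hνle _ hlmS
      have hlmuniv : lm univ ≤ ν univ + ENNReal.ofReal ε := by
        have : lm univ = ∑' j, μs j (Bs j) := by
          rw [hlmdef, Measure.sum_apply _ MeasurableSet.univ]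
          congr 1; funext j; rw [Measure.restrict_apply_univ]
        rw [this]; exact h5'
      set dm := lm - ν with hdmdef
      haveI : IsFiniteMeasure dm := isFiniteMeasure_of_le lm Measure.sub_le
      have hsplit : (∫ x, |f x| ∂lm) = (∫ x, |f x| ∂dm) + ∫ x, |f x| ∂ν := by
        rw [← integral_add_measure (hint dm) (hint ν)]
        congr 1
        exact (Measure.sub_add_cancel_of_le hνlm).symm
      have hdmuniv : dm univ ≤ ENNReal.ofReal ε := by
        rw [hdmdef, Measure.sub_apply MeasurableSet.univ hνlm]
        exact tsub_le_iff_right.mpr (by rwa [add_comm] at hlmuniv)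
      have hdmint : (∫ x, |f x| ∂dm) ≤ C * ε := by
        have hb := norm_integral_le_of_norm_le_const (μ := dm)
          (f := fun x => |f x|) (C := C) (ae_of_all _ fun x => by
            rw [Real.norm_eq_abs, abs_abs]; exact hC x)
        have h1' : (∫ x, |f x| ∂dm) ≤ C * (dm univ).toReal :=
          le_trans (le_abs_self _) (by rwa [Real.norm_eq_abs] at hb)
        refine h1'.trans ?_
        refine mul_le_mul_of_nonneg_left ?_ hC0
        have := (ENNReal.toReal_le_toReal (measure_ne_top _ _) ENNReal.ofReal_ne_top).mpr hdmuniv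
        rwa [ENNReal.toReal_ofReal hε.le] at this
      calc |T f π| ≤ P * ∫ x, |f x| ∂lm := hglue.2 f π hfπ
        _ = P * ((∫ x, |f x| ∂dm) + ∫ x, |f x| ∂ν) := by rw [hsplit]
        _ ≤ P * ((C * ε) + ∫ x, |f x| ∂ν) := by
            refine mul_le_mul_of_nonneg_left (add_le_add_left hdmint _) hP
        _ = P * (∫ x, |f x| ∂ν) + P * C * ε := by ring
    by_cases hPC : P * C = 0
    · have := main 1 one_pos
      rw [hPC] at this
      simpa using this
    · have hPC' : 0 < P * C := lt_of_le_of_ne (mul_nonneg hP hC0) (Ne.symm hPC)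
      refine le_of_forall_pos_le_add fun δ hδ => ?_
      have := main (δ / (P * C)) (div_pos hδ hPC')
      calc |T f π| ≤ P * (∫ x, |f x| ∂ν) + P * C * (δ / (P * C)) := this
        _ = P * (∫ x, |f x| ∂ν) + δ := by rw [← mul_div_assoc, mul_div_cancel_left₀ δ hPC]
  refine ⟨ν, hνfin, hmb, ?_, ?_, formula⟩
  · intro ε hε
    obtain ⟨K, hK, hlt⟩ := hμ0tight ε hε
    exact ⟨K, hK, lt_of_le_of_lt (hνle0 _) hlt⟩
  · intro μ hf hm B _
    exact Measure.le_iff'.mp (hνle μ ⟨hf, hm⟩) B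

end Main

/-- Existence of the mass measure: for a multilinear functional `T` on `D^k(X)` satisfying the
finite mass axiom there is a minimal finite Borel measure `‖T‖` among those satisfying the mass
bound (given by the infimum `⋀` of that family, computed via countable subfamilies and Borel
partitions); it satisfies the mass bound and it is tight. -/
theorem massMeasure_exists_minimal {X : Type*} [MetricSpace X] [MeasurableSpace X] [BorelSpace X]
    {k : ℕ} (T : Func X k) (hmul : IsMultilinear T) (hT : HasFiniteMass T) :
    ∃ ν : Measure X, IsFiniteMeasure ν ∧ MassBound T ν ∧ IsTightMeasure ν ∧
      (∀ μ : Measure X, IsFiniteMeasure μ → MassBound T μ →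
        ∀ B : Set X, MeasurableSet B → ν B ≤ μ B) ∧
      (∀ B : Set X, MeasurableSet B →
        ν B = sInf {m : ENNReal | ∃ (μs : ℕ → Measure X) (Bs : ℕ → Set X),
          (∀ j, IsFiniteMeasure (μs j) ∧ MassBound T (μs j)) ∧
          (∀ j, MeasurableSet (Bs j)) ∧ Pairwise (Function.onFun Disjoint Bs) ∧
          (⋃ j, Bs j) = B ∧ m = ∑' j, μs j (Bs j)}) := by
  exact massMeasureExistsMinimalAux T hmul hT
end
end

section
/- Let X be a metric space and k ≥ 0. Then D_k(X) is a real vector space under pointwise operations, M(T) = ‖T‖(X) is a norm on D_k(X), and (D_k(X), M) is complete; that is, (D_k(X), M) is a Banach space. -/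
open MeasureTheory Metric Set Filter

noncomputable section

set_option linter.unusedSectionVars false

section AuxLemmas

variable {X : Type*} [MetricSpace X] [MeasurableSpace X] [BorelSpace X] {k : ℕ}

lemma IsLip.continuous {f : X → ℝ} (h : IsLip f) : Continuous f := h.choose_spec.continuous

lemma IsLipBdd.continuous {f : X → ℝ} (h : IsLipBdd f) : Continuous f := h.1.continuous

lemma IsLip.add {f g : X → ℝ} (hf : IsLip f) (hg : IsLip g) : IsLip (f + g) := by
  obtain ⟨K, hK⟩ := hf; obtain ⟨L, hL⟩ := hg; exact ⟨K + L, hK.add hL⟩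

lemma IsLip.smul {f : X → ℝ} (c : ℝ) (hf : IsLip f) : IsLip (c • f) := by
  obtain ⟨K, hK⟩ := hf
  refine ⟨Real.toNNReal |c| * K, LipschitzWith.of_dist_le_mul fun x y => ?_⟩
  simp only [Pi.smul_apply, smul_eq_mul, Real.dist_eq, ← mul_sub, abs_mul]
  push_cast [Real.coe_toNNReal _ (abs_nonneg c)]
  rw [mul_assoc]
  refine mul_le_mul_of_nonneg_left ?_ (abs_nonneg c)
  have := hK.dist_le_mul x y
  rwa [Real.dist_eq] at this

lemma IsLipBdd.add {f g : X → ℝ} (hf : IsLipBdd f) (hg : IsLipBdd g) : IsLipBdd (f + g) := by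
  obtain ⟨C, hC⟩ := hf.2; obtain ⟨D, hD⟩ := hg.2
  exact ⟨hf.1.add hg.1, C + D, fun x => (abs_add_le _ _).trans (add_le_add (hC x) (hD x))⟩

lemma IsLipBdd.smul {f : X → ℝ} (c : ℝ) (hf : IsLipBdd f) : IsLipBdd (c • f) := by
  obtain ⟨C, hC⟩ := hf.2
  refine ⟨hf.1.smul c, |c| * C, fun x => ?_⟩
  simp only [Pi.smul_apply, smul_eq_mul, abs_mul]
  exact mul_le_mul_of_nonneg_left (hC x) (abs_nonneg c)

lemma IsLipBdd.mul {f g : X → ℝ} (hf : IsLipBdd f) (hg : IsLipBdd g) : IsLipBdd (f * g) := by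
  obtain ⟨⟨K, hK⟩, C, hC⟩ := hf
  obtain ⟨⟨L, hL⟩, D, hD⟩ := hg
  have hC' : ∀ x, |f x| ≤ max C 0 := fun x => (hC x).trans (le_max_left _ _)
  have hD' : ∀ x, |g x| ≤ max D 0 := fun x => (hD x).trans (le_max_left _ _)
  constructor
  · refine ⟨Real.toNNReal (max C 0) * L + Real.toNNReal (max D 0) * K,
      LipschitzWith.of_dist_le_mul fun x y => ?_⟩
    have key : f x * g x - f y * g y = f x * (g x - g y) + g y * (f x - f y) := by ring
    simp only [Pi.mul_apply, Real.dist_eq, key]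
    push_cast [Real.coe_toNNReal _ (le_max_right C 0), Real.coe_toNNReal _ (le_max_right D 0)]
    calc |f x * (g x - g y) + g y * (f x - f y)|
        ≤ |f x * (g x - g y)| + |g y * (f x - f y)| := abs_add_le _ _
      _ ≤ max C 0 * (L * dist x y) + max D 0 * (K * dist x y) := by
          rw [abs_mul, abs_mul]
          refine add_le_add (mul_le_mul (hC' x) ?_ (abs_nonneg _) (le_max_right C 0))
            (mul_le_mul (hD' y) ?_ (abs_nonneg _) (le_max_right D 0))
          · have := hL.dist_le_mul x y; rwa [Real.dist_eq] at this
          · have := hK.dist_le_mul x y; rwa [Real.dist_eq] at this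
      _ = (max C 0 * L + max D 0 * K) * dist x y := by ring
  · exact ⟨max C 0 * max D 0, fun x => by
      rw [Pi.mul_apply, abs_mul]
      exact mul_le_mul (hC' x) (hD' x) (abs_nonneg _) (le_max_right C 0)⟩

lemma isLipBdd_const (c : ℝ) : IsLipBdd (fun _ : X => c) :=
  ⟨⟨0, LipschitzWith.const' c⟩, |c|, fun _ => le_rfl⟩

lemma isLip_update {π : Fin k → X → ℝ} (hπ : ∀ j, IsLip (π j)) {g : X → ℝ} (hg : IsLip g)
    (i : Fin k) : ∀ j, IsLip (Function.update π i g j) := by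
  intro j
  rcases eq_or_ne j i with rfl | hne
  · rw [Function.update_self]; exact hg
  · rw [Function.update_of_ne hne]; exact hπ j

end AuxLemmas

section AuxLemmas2

variable {X : Type*} [MetricSpace X] [MeasurableSpace X] [BorelSpace X] {k : ℕ}

lemma IsLipBdd.integrable {f : X → ℝ} (hf : IsLipBdd f) (μ : Measure X) [IsFiniteMeasure μ] :
    Integrable f μ := by
  obtain ⟨C, hC⟩ := hf.2
  exact (integrable_const C).mono' hf.continuous.aestronglyMeasurable
    (Filter.Eventually.of_forall fun x => by simpa using hC x)

lemma IsLipBdd.integrable_abs {f : X → ℝ} (hf : IsLipBdd f) (μ : Measure X)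
    [IsFiniteMeasure μ] : Integrable (fun x => |f x|) μ := (hf.integrable μ).abs

lemma integral_abs_nonneg (f : X → ℝ) (μ : Measure X) : 0 ≤ ∫ x, |f x| ∂μ :=
  integral_nonneg fun x => abs_nonneg _

lemma integral_abs_le_const {f : X → ℝ} {C : ℝ} (hC : ∀ x, |f x| ≤ C) (μ : Measure X)
    [IsFiniteMeasure μ] : ∫ x, |f x| ∂μ ≤ C * (μ Set.univ).toReal := by
  have := norm_integral_le_of_norm_le_const (μ := μ) (f := fun x => |f x|) (C := C)
    (Filter.Eventually.of_forall fun x => by simpa using hC x)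
  calc ∫ x, |f x| ∂μ ≤ ‖∫ x, |f x| ∂μ‖ := le_abs_self _
    _ ≤ C * (μ Set.univ).toReal := this

/-- prod of Lipschitz constants is nonneg -/
lemma prodLip_nonneg (π : Fin k → X → ℝ) : 0 ≤ ∏ i, (lipConst (π i) : ℝ) :=
  Finset.prod_nonneg fun i _ => (lipConst (π i)).coe_nonneg

-- tightness lemmas
lemma isTight_add {μ ν : Measure X} (hμ : IsTightMeasure μ) (hν : IsTightMeasure ν) :
    IsTightMeasure (μ + ν) := by
  intro ε hε
  have h2 : (0 : ENNReal) < ε / 2 := ENNReal.div_pos hε.ne' (by norm_num)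
  obtain ⟨K, hK, hKμ⟩ := hμ _ h2
  obtain ⟨L, hL, hLν⟩ := hν _ h2
  refine ⟨K ∪ L, hK.union hL, ?_⟩
  have : (μ + ν) (K ∪ L)ᶜ ≤ μ Kᶜ + ν Lᶜ := by
    rw [Measure.add_apply]
    exact add_le_add (measure_mono (compl_subset_compl.2 subset_union_left))
      (measure_mono (compl_subset_compl.2 subset_union_right))
  calc (μ + ν) (K ∪ L)ᶜ ≤ μ Kᶜ + ν Lᶜ := this
    _ < ε / 2 + ε / 2 := ENNReal.add_lt_add hKμ hLν
    _ = ε := ENNReal.add_halves ε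

lemma isTight_smul {μ : Measure X} (hμ : IsTightMeasure μ) {c : ENNReal} (hc : c ≠ ⊤) :
    IsTightMeasure (c • μ) := by
  rcases eq_or_ne c 0 with rfl | hc0
  · intro ε hε
    exact ⟨∅, isCompact_empty, by simpa using hε⟩
  · intro ε hε
    obtain ⟨K, hK, hKμ⟩ := hμ (ε / c) (ENNReal.div_pos hε.ne' hc)
    refine ⟨K, hK, ?_⟩
    rw [Measure.smul_apply, smul_eq_mul]
    calc c * μ Kᶜ < c * (ε / c) := by
          exact ENNReal.mul_lt_mul_right hc0 hc hKμ
      _ ≤ ε := ENNReal.mul_div_le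

lemma isTight_zero : IsTightMeasure (0 : Measure X) := by
  intro ε hε
  exact ⟨∅, isCompact_empty, by simpa using hε⟩

end AuxLemmas2

section Approx

variable {X : Type*} [MetricSpace X] [MeasurableSpace X] [BorelSpace X] {k : ℕ}

lemma abs_sub_indicator_le {χ : X → ℝ} {B S : Set X}
    (h0 : ∀ x, 0 ≤ χ x) (h1 : ∀ x, χ x ≤ 1)
    (hS : ∀ x, x ∉ S → (x ∈ B ∧ χ x = 1) ∨ (x ∉ B ∧ χ x = 0)) :
    ∀ x, |χ x - B.indicator (fun _ => (1 : ℝ)) x| ≤ S.indicator (fun _ => (1 : ℝ)) x := by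
  intro x
  by_cases hx : x ∈ S
  · rw [Set.indicator_of_mem hx]
    by_cases hb : x ∈ B
    · rw [Set.indicator_of_mem hb]
      rw [abs_sub_comm, abs_of_nonneg (by linarith [h1 x])]
      linarith [h0 x]
    · rw [Set.indicator_of_notMem hb, sub_zero, abs_of_nonneg (h0 x)]
      exact h1 x
  · rw [Set.indicator_of_notMem hx]
    rcases hS x hx with ⟨hb, he⟩ | ⟨hb, he⟩
    · rw [Set.indicator_of_mem hb, he, sub_self, abs_zero]
    · rw [Set.indicator_of_notMem hb, he, sub_self, abs_zero]

/-- Lipschitz approximation of an indicator in `L¹` of a finite Borel measure. -/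
lemma exists_lip_approx (ν : Measure X) [IsFiniteMeasure ν] {B : Set X}
    (hB : MeasurableSet B) {η : ℝ} (hη : 0 < η) :
    ∃ χ : X → ℝ, IsLipBdd χ ∧ (∀ x, 0 ≤ χ x) ∧ (∀ x, χ x ≤ 1) ∧
      ∫ x, |χ x - B.indicator (fun _ => (1 : ℝ)) x| ∂ν ≤ η := by
  have hint_diff : ∀ (χ : X → ℝ), IsLipBdd χ → ∀ (S : Set X), MeasurableSet S →
      (∀ x, |χ x - B.indicator (fun _ => (1:ℝ)) x| ≤ S.indicator (fun _ => (1:ℝ)) x) →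
      ∫ x, |χ x - B.indicator (fun _ => (1 : ℝ)) x| ∂ν ≤ (ν S).toReal := by
    intro χ hχ S hSm hle
    have hmeas : AEStronglyMeasurable (fun x => |χ x - B.indicator (fun _ => (1:ℝ)) x|) ν :=
      ((hχ.continuous.measurable.sub (measurable_const.indicator hB)).abs).aestronglyMeasurable
    have hind : Integrable (S.indicator (fun _ => (1:ℝ))) ν :=
      (integrable_const (1:ℝ)).indicator hSm
    have hintg : Integrable (fun x => |χ x - B.indicator (fun _ => (1:ℝ)) x|) ν :=
      hind.mono' hmeas (Filter.Eventually.of_forall fun x => by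
        rw [Real.norm_eq_abs, abs_abs]
        exact (hle x).trans (by
          by_cases hxS : x ∈ S <;>
            simp [Set.indicator_of_mem, Set.indicator_of_notMem, hxS]))
    calc ∫ x, |χ x - B.indicator (fun _ => (1 : ℝ)) x| ∂ν
        ≤ ∫ x, S.indicator (fun _ => (1:ℝ)) x ∂ν := integral_mono hintg hind hle
      _ = (ν S).toReal := by rw [integral_indicator_const (1:ℝ) hSm]; simp; rfl
  have hε : (ENNReal.ofReal (η / 2)) ≠ 0 := by
    simp only [ne_eq, ENNReal.ofReal_eq_zero, not_le]; linarith
  obtain ⟨C, hCB, hCc, hC⟩ := hB.exists_isClosed_lt_add (μ := ν) (measure_ne_top ν B) hε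
  have hCfin : ν C ≠ ⊤ := measure_ne_top ν C
  have hBC : ν (B \ C) < ENNReal.ofReal (η / 2) :=
    measure_diff_lt_of_lt_add hCc.nullMeasurableSet hCB hCfin hC
  rcases C.eq_empty_or_nonempty with rfl | hCne
  · -- use χ = 0
    refine ⟨fun _ => 0, isLipBdd_const 0, fun x => le_rfl, fun x => zero_le_one, ?_⟩
    have := hint_diff (fun _ => 0) (isLipBdd_const 0) B hB (fun x => by
      by_cases hb : x ∈ B <;>
        simp [Set.indicator_of_mem, Set.indicator_of_notMem, hb])
    refine this.trans ?_
    have : ν B ≤ ENNReal.ofReal (η / 2) := by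
      simpa using hC.le
    calc (ν B).toReal ≤ (ENNReal.ofReal (η/2)).toReal :=
          ENNReal.toReal_mono ENNReal.ofReal_ne_top this
      _ ≤ η := by rw [ENNReal.toReal_ofReal (by linarith)]; linarith
  · have hthick : Tendsto (fun r => ν (thickening r C)) (nhdsWithin 0 (Set.Ioi 0))
        (nhds (ν C)) :=
      tendsto_measure_thickening_of_isClosed ⟨1, one_pos, measure_ne_top ν _⟩ hCc
    have hlt : ν C < ν C + ENNReal.ofReal (η / 2) := ENNReal.lt_add_right hCfin hε
    obtain ⟨t, htm, ht0⟩ : ∃ t : ℝ, ν (thickening t C) < ν C + ENNReal.ofReal (η / 2) ∧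
        0 < t :=
      ((hthick.eventually_lt_const hlt).and self_mem_nhdsWithin).exists
    have hTC : ν (thickening t C \ C) < ENNReal.ofReal (η / 2) :=
      measure_diff_lt_of_lt_add hCc.nullMeasurableSet (self_subset_thickening ht0 C) hCfin htm
    set χ : X → ℝ := fun x => max (1 - infDist x C / t) 0 with hχdef
    have h0 : ∀ x, 0 ≤ χ x := fun x => le_max_right _ _
    have h1 : ∀ x, χ x ≤ 1 := fun x => by
      apply max_le _ zero_le_one
      have : 0 ≤ infDist x C / t := div_nonneg infDist_nonneg ht0.le
      linarith
    have hχlip : IsLipBdd χ := by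
      refine ⟨⟨Real.toNNReal t⁻¹, LipschitzWith.of_dist_le_mul fun x y => ?_⟩, 1, fun x => by
        rw [abs_of_nonneg (h0 x)]; exact h1 x⟩
      rw [Real.dist_eq]
      calc |χ x - χ y| ≤ |(1 - infDist x C / t) - (1 - infDist y C / t)| :=
            abs_max_sub_max_le_abs _ _ _
        _ = |infDist y C - infDist x C| / t := by
            have he : (1 - infDist x C / t) - (1 - infDist y C / t)
                = (infDist y C - infDist x C) / t := by field_simp; ring
            rw [he, abs_div, abs_of_pos ht0]
        _ ≤ dist y x / t := by
            gcongr
            have := (lipschitz_infDist_pt C).dist_le_mul y x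
            rw [NNReal.coe_one, one_mul, Real.dist_eq] at this
            exact this
        _ = Real.toNNReal t⁻¹ * dist x y := by
            rw [dist_comm, Real.coe_toNNReal _ (inv_nonneg.2 ht0.le)]
            field_simp
    have hχ1 : ∀ x ∈ C, χ x = 1 := fun x hx => by
      simp [hχdef, infDist_zero_of_mem hx]
    have hχ0 : ∀ x, x ∉ thickening t C → χ x = 0 := by
      intro x hx
      rw [mem_thickening_iff_infDist_lt hCne, not_lt] at hx
      have : 1 - infDist x C / t ≤ 0 := by
        rw [sub_nonpos]
        exact (one_le_div ht0).2 hx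
      simp [hχdef, max_eq_right this]
    set S : Set X := (thickening t C \ C) ∪ (B \ C) with hSdef
    have hSm : MeasurableSet S :=
      ((isOpen_thickening.measurableSet).diff hCc.measurableSet).union
        (hB.diff hCc.measurableSet)
    have hle : ∀ x, |χ x - B.indicator (fun _ => (1:ℝ)) x| ≤ S.indicator (fun _ => (1:ℝ)) x := by
      apply abs_sub_indicator_le h0 h1
      intro x hx
      by_cases hxC : x ∈ C
      · exact Or.inl ⟨hCB hxC, hχ1 x hxC⟩
      · have hxT : x ∉ thickening t C := fun h => hx (Or.inl ⟨h, hxC⟩)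
        have hxB : x ∉ B := fun h => hx (Or.inr ⟨h, hxC⟩)
        exact Or.inr ⟨hxB, hχ0 x hxT⟩
    refine ⟨χ, hχlip, h0, h1, (hint_diff χ hχlip S hSm hle).trans ?_⟩
    have hS : ν S ≤ ENNReal.ofReal η := by
      calc ν S ≤ ν (thickening t C \ C) + ν (B \ C) := measure_union_le _ _
        _ ≤ ENNReal.ofReal (η/2) + ENNReal.ofReal (η/2) := add_le_add hTC.le hBC.le
        _ = ENNReal.ofReal η := by rw [← ENNReal.ofReal_add (by linarith) (by linarith)]; norm_num
    calc (ν S).toReal ≤ (ENNReal.ofReal η).toReal :=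
          ENNReal.toReal_mono ENNReal.ofReal_ne_top hS
      _ = η := ENNReal.toReal_ofReal hη.le

end Approx

section Patch

variable {X : Type*} [MetricSpace X] [MeasurableSpace X] [BorelSpace X] {k : ℕ}

lemma massBound_patch (T : Func X k)
    (hTadd : ∀ f g π, IsLipBdd f → IsLipBdd g → (∀ i, IsLip (π i)) →
      T (f + g) π = T f π + T g π)
    (μ₀ : Measure X) [IsFiniteMeasure μ₀] (h₀ : MassBound T μ₀)
    (B : ℕ → Set X) (hBm : ∀ n, MeasurableSet (B n)) (hBu : (⋃ n, B n) = Set.univ)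
    (μs : ℕ → Measure X) (hμfin : ∀ n, IsFiniteMeasure (μs n))
    (hμ : ∀ n, MassBound T (μs n))
    [hsumfin : IsFiniteMeasure (Measure.sum fun n => (μs n).restrict (B n))] :
    MassBound T (Measure.sum fun n => (μs n).restrict (B n)) := by
  intro f π hdom
  obtain ⟨hf, hπ⟩ := hdom
  obtain ⟨Cf, hCf⟩ := hf.2
  set C : ℝ := max Cf 0 with hCdef
  have hC : ∀ x, |f x| ≤ C := fun x => (hCf x).trans (le_max_left _ _)
  have hC0 : (0 : ℝ) ≤ C := le_max_right _ _
  set P : ℝ := ∏ i, (lipConst (π i) : ℝ) with hPdef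
  have hP : 0 ≤ P := prodLip_nonneg π
  set μ : Measure X := Measure.sum fun n => (μs n).restrict (B n) with hμdef
  refine le_of_forall_pos_le_add fun δ hδ => ?_
  set δ' : ℝ := δ / (4 * P * C + 2) with hδ'def
  have hden : (0:ℝ) < 4 * P * C + 2 := by nlinarith
  have hδ' : 0 < δ' := div_pos hδ hden
  -- choose cutoffs
  have happrox : ∀ n : ℕ, ∃ χ : X → ℝ, IsLipBdd χ ∧ (∀ x, 0 ≤ χ x) ∧ (∀ x, χ x ≤ 1) ∧
      ∫ x, |χ x - (B n).indicator (fun _ => (1 : ℝ)) x| ∂(μ₀ + μs n) ≤ δ' * (1/2)^n := by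
    intro n
    haveI := hμfin n
    exact exists_lip_approx (μ₀ + μs n) (hBm n) (by positivity)
  choose χ hχlip hχ0 hχ1 hχint using happrox
  set g : ℕ → X → ℝ := fun n x => |χ n x - (B n).indicator (fun _ => (1 : ℝ)) x| with hgdef
  have hgmeas : ∀ n, Measurable (g n) := fun n =>
    ((hχlip n).continuous.measurable.sub (measurable_const.indicator (hBm n))).abs
  have hgnonneg : ∀ n x, 0 ≤ g n x := fun n x => abs_nonneg _
  have hgbdd : ∀ n x, g n x ≤ 2 := by
    intro n x
    have h1 : |χ n x| ≤ 1 := abs_le.2 ⟨by linarith [hχ0 n x], hχ1 n x⟩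
    have h2 : |(B n).indicator (fun _ => (1:ℝ)) x| ≤ 1 := by
      by_cases hb : x ∈ B n <;> simp [Set.indicator_of_mem, Set.indicator_of_notMem, hb]
    calc g n x ≤ |χ n x| + |(B n).indicator (fun _ => (1:ℝ)) x| := abs_sub _ _
      _ ≤ 2 := by linarith
  have hgint : ∀ n (ν : Measure X), IsFiniteMeasure ν → Integrable (g n) ν := by
    intro n ν hν
    haveI := hν
    exact (integrable_const (2:ℝ)).mono' (hgmeas n).aestronglyMeasurable
      (Filter.Eventually.of_forall fun x => by
        rw [Real.norm_eq_abs, abs_of_nonneg (hgnonneg n x)]; exact hgbdd n x)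
  -- split the integral bound
  have hg0 : ∀ n, ∫ x, g n x ∂μ₀ ≤ δ' * (1/2)^n := by
    intro n
    haveI := hμfin n
    have := hχint n
    rw [integral_add_measure (hgint n μ₀ inferInstance) (hgint n (μs n) (hμfin n))] at this
    have h2 : 0 ≤ ∫ x, g n x ∂(μs n) := integral_nonneg (hgnonneg n)
    linarith
  have hgn : ∀ n, ∫ x, g n x ∂(μs n) ≤ δ' * (1/2)^n := by
    intro n
    haveI := hμfin n
    have := hχint n
    rw [integral_add_measure (hgint n μ₀ inferInstance) (hgint n (μs n) (hμfin n))] at this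
    have h2 : 0 ≤ ∫ x, g n x ∂μ₀ := integral_nonneg (hgnonneg n)
    linarith
  -- the partition of unity
  set ρ : ℕ → X → ℝ := fun n x => ∏ m ∈ Finset.range n, (1 - χ m x) with hρdef
  have hρsucc : ∀ n, ρ (n+1) = fun x => ρ n x * (1 - χ n x) :=
    fun n => funext fun x => Finset.prod_range_succ _ _
  have honeminus : ∀ n, IsLipBdd (fun x => 1 - χ n x) := by
    intro n
    have h := (isLipBdd_const (X := X) 1).add ((hχlip n).smul (-1))
    have he : ((fun _ : X => (1:ℝ)) + (-1 : ℝ) • χ n) = fun x => 1 - χ n x := by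
      funext x; simp; ring
    rwa [he] at h
  have hρlip : ∀ n, IsLipBdd (ρ n) := by
    intro n
    induction n with
    | zero => simpa [hρdef] using isLipBdd_const (X := X) 1
    | succ n ih =>
      rw [hρsucc n]
      exact ih.mul (honeminus n)
  have hρ01 : ∀ n x, 0 ≤ ρ n x ∧ ρ n x ≤ 1 := by
    intro n
    induction n with
    | zero => intro x; simp [hρdef]
    | succ n ih =>
      intro x
      rw [hρsucc n]
      have h1 := (ih x).1; have h2 := (ih x).2
      have h3 : 0 ≤ 1 - χ n x := by linarith [hχ1 n x]
      have h4 : 1 - χ n x ≤ 1 := by linarith [hχ0 n x]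
      exact ⟨mul_nonneg h1 h3, mul_le_one₀ h2 h3 h4⟩
  have hρanti : ∀ m n, m ≤ n → ∀ x, ρ n x ≤ ρ m x := by
    intro m n hmn x
    induction n, hmn using Nat.le_induction with
    | base => exact le_rfl
    | succ n hmn ih =>
      rw [hρsucc n]
      calc ρ n x * (1 - χ n x) ≤ ρ n x * 1 := by
            have := (hρ01 n x).1
            have h4 : 1 - χ n x ≤ 1 := by linarith [hχ0 n x]
            nlinarith
        _ = ρ n x := mul_one _
        _ ≤ ρ m x := ih
  have hρchi : ∀ n N, n < N → ∀ x, ρ N x ≤ 1 - χ n x := by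
    intro n N hnN x
    calc ρ N x ≤ ρ (n+1) x := hρanti (n+1) N hnN x
      _ = ρ n x * (1 - χ n x) := by rw [hρsucc n]
      _ ≤ 1 * (1 - χ n x) := by
          have := (hρ01 n x).2
          have h3 : 0 ≤ 1 - χ n x := by linarith [hχ1 n x]
          nlinarith
      _ = 1 - χ n x := one_mul _
  -- products with f are in the domain
  have hfψ : ∀ n, IsLipBdd (fun x => f x * (χ n x * ρ n x)) :=
    fun n => hf.mul ((hχlip n).mul (hρlip n))
  have hfρ : ∀ N, IsLipBdd (fun x => f x * ρ N x) := fun N => hf.mul (hρlip N)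
  -- decomposition
  have hdecomp : ∀ N, T f π = (∑ n ∈ Finset.range N, T (fun x => f x * (χ n x * ρ n x)) π)
      + T (fun x => f x * ρ N x) π := by
    intro N
    induction N with
    | zero =>
      have he : (fun x => f x * ρ 0 x) = f := funext fun x => by simp [hρdef]
      rw [he]; simp
    | succ N ih =>
      have hsum : (fun x => f x * (χ N x * ρ N x)) + (fun x => f x * ρ (N+1) x)
          = fun x => f x * ρ N x := by
        funext x
        rw [Pi.add_apply, hρsucc N]
        ring
      have := hTadd (fun x => f x * (χ N x * ρ N x)) (fun x => f x * ρ (N+1) x) π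
        (hfψ N) (hfρ (N+1)) hπ
      rw [hsum] at this
      rw [ih, this, Finset.sum_range_succ]
      ring
  -- term bounds
  have hterm : ∀ n, |T (fun x => f x * (χ n x * ρ n x)) π| ≤
      P * ((∫ x, |f x| ∂((μs n).restrict (B n))) + C * (δ' * (1/2)^n)) := by
    intro n
    haveI := hμfin n
    have h1 := hμ n (fun x => f x * (χ n x * ρ n x)) π ⟨hfψ n, hπ⟩
    refine h1.trans (mul_le_mul_of_nonneg_left ?_ hP)
    have hpoint : ∀ x, |f x * (χ n x * ρ n x)| ≤
        (B n).indicator (fun y => |f y|) x + C * g n x := by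
      intro x
      have h2 : 0 ≤ χ n x * ρ n x := mul_nonneg (hχ0 n x) (hρ01 n x).1
      have h3 : χ n x * ρ n x ≤ χ n x := by nlinarith [(hρ01 n x).2, hχ0 n x, (hρ01 n x).1]
      rw [abs_mul, abs_of_nonneg h2]
      have h4 : |f x| * (χ n x * ρ n x) ≤ |f x| * χ n x :=
        mul_le_mul_of_nonneg_left h3 (abs_nonneg _)
      refine h4.trans ?_
      by_cases hb : x ∈ B n
      · rw [Set.indicator_of_mem hb]
        have h5 : |f x| * χ n x ≤ |f x| := by nlinarith [hχ1 n x, hχ0 n x, abs_nonneg (f x)]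
        have h6 : 0 ≤ C * g n x := mul_nonneg hC0 (hgnonneg n x)
        linarith
      · rw [Set.indicator_of_notMem hb]
        have hg : g n x = χ n x := by
          simp [hgdef, Set.indicator_of_notMem hb, abs_of_nonneg (hχ0 n x)]
        rw [zero_add, hg]
        exact mul_le_mul (hC x) le_rfl (hχ0 n x) hC0
    have hL : Integrable (fun x => |f x * (χ n x * ρ n x)|) (μs n) :=
      ((hfψ n).integrable (μs n)).abs
    have hR1 : Integrable ((B n).indicator (fun y => |f y|)) (μs n) :=
      ((hf.integrable (μs n)).abs).indicator (hBm n)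
    have hR2 : Integrable (fun x => C * g n x) (μs n) := (hgint n (μs n) (hμfin n)).const_mul C
    calc ∫ x, |f x * (χ n x * ρ n x)| ∂(μs n)
        ≤ ∫ x, ((B n).indicator (fun y => |f y|) x + C * g n x) ∂(μs n) :=
          integral_mono hL (hR1.add hR2) hpoint
      _ = ∫ x, (B n).indicator (fun y => |f y|) x ∂(μs n) + C * ∫ x, g n x ∂(μs n) := by
          rw [integral_add hR1 hR2, integral_const_mul]
      _ ≤ (∫ x, |f x| ∂((μs n).restrict (B n))) + C * (δ' * (1/2)^n) := by
          rw [integral_indicator (hBm n)]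
          exact add_le_add_right (mul_le_mul_of_nonneg_left (hgn n) hC0) _
  -- partial sums of restricted integrals
  have hhassum : HasSum (fun n => ∫ x, |f x| ∂((μs n).restrict (B n))) (∫ x, |f x| ∂μ) :=
    hasSum_integral_measure (hf.integrable_abs μ)
  have hps : ∀ N, ∑ n ∈ Finset.range N, ∫ x, |f x| ∂((μs n).restrict (B n))
      ≤ ∫ x, |f x| ∂μ :=
    fun N => sum_le_hasSum _ (fun n _ => integral_abs_nonneg _ _) hhassum
  -- remainder
  set E : ℕ → Set X := fun N => ⋃ n ∈ Finset.range N, B n with hEdef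
  have hEm : ∀ N, MeasurableSet (E N) := fun N =>
    (Finset.range N).measurableSet_biUnion (fun n _ => hBm n)
  have hrem : ∀ N, |T (fun x => f x * ρ N x) π| ≤
      P * (C * ((∑ n ∈ Finset.range N, δ' * (1/2)^n) + (μ₀ (E N)ᶜ).toReal)) := by
    intro N
    have h1 := h₀ (fun x => f x * ρ N x) π ⟨hfρ N, hπ⟩
    refine h1.trans (mul_le_mul_of_nonneg_left ?_ hP)
    have hpoint : ∀ x, |f x * ρ N x| ≤
        C * ((∑ n ∈ Finset.range N, g n x) + (E N)ᶜ.indicator (fun _ => (1:ℝ)) x) := by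
      intro x
      rw [abs_mul, abs_of_nonneg (hρ01 N x).1]
      by_cases hx : x ∈ E N
      · obtain ⟨n, hn, hxB⟩ : ∃ n ∈ Finset.range N, x ∈ B n := by
          simpa [hEdef] using hx
        have h3 := hρchi n N (Finset.mem_range.1 hn) x
        have h2 : ρ N x ≤ g n x := by
          have hge : g n x = |χ n x - 1| := by simp [hgdef, Set.indicator_of_mem hxB]
          rw [hge, abs_sub_comm, abs_of_nonneg (by linarith [hχ1 n x] : (0:ℝ) ≤ 1 - χ n x)]
          exact h3
        have h4 : g n x ≤ ∑ m ∈ Finset.range N, g m x :=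
          Finset.single_le_sum (fun m _ => hgnonneg m x) hn
        have h5 : (0:ℝ) ≤ (E N)ᶜ.indicator (fun _ => (1:ℝ)) x :=
          Set.indicator_nonneg (fun _ _ => zero_le_one) x
        have h6 : |f x| * ρ N x ≤ C * ρ N x :=
          mul_le_mul_of_nonneg_right (hC x) (hρ01 N x).1
        have h7 : C * ρ N x ≤ C * (∑ m ∈ Finset.range N, g m x) :=
          mul_le_mul_of_nonneg_left (h2.trans h4) hC0
        nlinarith
      · rw [Set.indicator_of_mem (Set.mem_compl hx)]
        have h2 : ρ N x ≤ 1 := (hρ01 N x).2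
        have h3 : 0 ≤ ∑ m ∈ Finset.range N, g m x := Finset.sum_nonneg fun m _ => hgnonneg m x
        have h6 : |f x| * ρ N x ≤ C * 1 := mul_le_mul (hC x) h2 (hρ01 N x).1 hC0
        nlinarith
    have hL : Integrable (fun x => |f x * ρ N x|) μ₀ := ((hfρ N).integrable μ₀).abs
    have hR1 : Integrable (fun x => ∑ n ∈ Finset.range N, g n x) μ₀ :=
      integrable_finset_sum _ (fun n _ => hgint n μ₀ inferInstance)
    have hR2 : Integrable ((E N)ᶜ.indicator (fun _ => (1:ℝ))) μ₀ :=
      (integrable_const 1).indicator (hEm N).compl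
    calc ∫ x, |f x * ρ N x| ∂μ₀
        ≤ ∫ x, C * ((∑ n ∈ Finset.range N, g n x) + (E N)ᶜ.indicator (fun _ => (1:ℝ)) x) ∂μ₀ :=
          integral_mono hL ((hR1.add hR2).const_mul C) hpoint
      _ = C * ((∑ n ∈ Finset.range N, ∫ x, g n x ∂μ₀) + (μ₀ (E N)ᶜ).toReal) := by
          rw [integral_const_mul, integral_add hR1 hR2,
            integral_finset_sum _ (fun n _ => hgint n μ₀ inferInstance),
            integral_indicator_const (1:ℝ) (hEm N).compl]
          simp [measureReal_def]
      _ ≤ C * ((∑ n ∈ Finset.range N, δ' * (1/2)^n) + (μ₀ (E N)ᶜ).toReal) :=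
          mul_le_mul_of_nonneg_left
            (add_le_add_left (Finset.sum_le_sum fun n _ => hg0 n) _) hC0
  -- geometric bound
  have hgeo : ∀ N, ∑ n ∈ Finset.range N, δ' * (1/2:ℝ)^n ≤ 2 * δ' := by
    intro N
    rw [← Finset.mul_sum]
    have h2 : ∑ n ∈ Finset.range N, (1/2:ℝ)^n ≤ 2 := by
      have := Summable.sum_le_tsum (Finset.range N) (fun i _ => by positivity)
        (summable_geometric_two)
      rwa [tsum_geometric_two] at this
    nlinarith
  have hPC : (0:ℝ) ≤ P * C := mul_nonneg hP hC0
  -- assemble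
  have hbound : ∀ N, |T f π| ≤ P * ∫ x, |f x| ∂μ + 4*P*C*δ' + P*C*(μ₀ (E N)ᶜ).toReal := by
    intro N
    rw [hdecomp N]
    have h1 : |(∑ n ∈ Finset.range N, T (fun x => f x * (χ n x * ρ n x)) π)
        + T (fun x => f x * ρ N x) π|
        ≤ (∑ n ∈ Finset.range N, |T (fun x => f x * (χ n x * ρ n x)) π|)
          + |T (fun x => f x * ρ N x) π| :=
      (abs_add_le _ _).trans (add_le_add_left (Finset.abs_sum_le_sum_abs _ _) _)
    refine h1.trans ?_
    have hsum2 : ∑ n ∈ Finset.range N, |T (fun x => f x * (χ n x * ρ n x)) π|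
        ≤ P * (∑ n ∈ Finset.range N, ∫ x, |f x| ∂((μs n).restrict (B n)))
          + P * C * (∑ n ∈ Finset.range N, δ' * (1/2)^n) := by
      refine (Finset.sum_le_sum fun n _ => hterm n).trans ?_
      rw [Finset.sum_congr rfl (fun n _ => mul_add P _ _), Finset.sum_add_distrib,
        ← Finset.mul_sum]
      have : ∑ n ∈ Finset.range N, P * (C * (δ' * (1/2:ℝ)^n))
          = P * C * ∑ n ∈ Finset.range N, δ' * (1/2:ℝ)^n := by
        rw [Finset.mul_sum]
        exact Finset.sum_congr rfl fun n _ => by ring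
      rw [this]
    have h2 := hrem N
    have hIn := mul_le_mul_of_nonneg_left (hps N) hP
    have hG1 := mul_le_mul_of_nonneg_left (hgeo N) hPC
    have hrN : (0:ℝ) ≤ (μ₀ (E N)ᶜ).toReal := ENNReal.toReal_nonneg
    nlinarith [hgeo N]
  -- take the limit in N
  have hrtend : Tendsto (fun N => (μ₀ (E N)ᶜ).toReal) atTop (nhds 0) := by
    have hanti : Antitone (fun N => (E N)ᶜ) := by
      intro a b hab
      exact compl_subset_compl.2
        (Set.biUnion_subset_biUnion_left (Finset.range_subset_range.2 hab))
    have hUE : (⋃ N, E N) = Set.univ := by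
      rw [← hBu]
      apply Set.Subset.antisymm
      · exact Set.iUnion_subset fun N => Set.iUnion₂_subset fun n _ => Set.subset_iUnion B n
      · intro x hx
        obtain ⟨n, hn⟩ := Set.mem_iUnion.1 hx
        exact Set.mem_iUnion.2 ⟨n+1, Set.mem_biUnion (Finset.self_mem_range_succ n) hn⟩
    have hint : (⋂ N, (E N)ᶜ) = ∅ := by
      rw [← Set.compl_iUnion, hUE, Set.compl_univ]
    have h0 := tendsto_measure_iInter_atTop (μ := μ₀)
      (fun N => (hEm N).compl.nullMeasurableSet) hanti ⟨0, measure_ne_top μ₀ _⟩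
    rw [hint, measure_empty] at h0
    have h1 := (ENNReal.tendsto_toReal (by simp : (0:ENNReal) ≠ ⊤)).comp h0
    simpa [Function.comp_def] using h1
  have hlim : Tendsto (fun N => P * ∫ x, |f x| ∂μ + 4*P*C*δ'
      + P*C*(μ₀ (E N)ᶜ).toReal) atTop
      (nhds (P * ∫ x, |f x| ∂μ + 4*P*C*δ' + P*C*0)) :=
    tendsto_const_nhds.add (hrtend.const_mul (P*C))
  have hfin := ge_of_tendsto hlim (Filter.Eventually.of_forall hbound)
  have h4 : 4*P*C*δ' ≤ δ := by
    rw [hδ'def, ← mul_div_assoc, div_le_iff₀ hden]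
    nlinarith [hδ.le]
  rw [mul_zero, add_zero] at hfin
  linarith


end Patch

section Close

variable {X : Type*} [MetricSpace X] [MeasurableSpace X] [BorelSpace X] {k : ℕ}

lemma massMeasure_univ_le {T : Func X k} {μ : Measure X} (hfin : IsFiniteMeasure μ)
    (hmb : MassBound T μ) : massMeasure T Set.univ ≤ μ Set.univ := by
  have h : massMeasure T ≤ μ := by
    apply sInf_le
    exact ⟨hfin, hmb⟩
  exact Measure.le_iff'.1 h Set.univ

lemma massMeasure_univ_ne_top {T : Func X k} (hfm : HasFiniteMass T) :
    massMeasure T Set.univ ≠ ⊤ := by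
  obtain ⟨μ, hfin, _, hmb⟩ := hfm
  haveI := hfin
  exact ((massMeasure_univ_le hfin hmb).trans_lt (measure_lt_top μ _)).ne

/-- Key lemma: measures realizing the mass, with tightness, exist within any `η`. -/
lemma exists_close (T : Func X k)
    (hTadd : ∀ f g π, IsLipBdd f → IsLipBdd g → (∀ i, IsLip (π i)) →
      T (f + g) π = T f π + T g π)
    (hfm : HasFiniteMass T) {η : ℝ} (hη : 0 < η) :
    ∃ μ : Measure X, IsFiniteMeasure μ ∧ IsTightMeasure μ ∧ MassBound T μ ∧
      μ Set.univ ≤ massMeasure T Set.univ + ENNReal.ofReal η := by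
  classical
  obtain ⟨μstar, hμstarfin, hμstartight, hμstarmb⟩ := hfm
  haveI := hμstarfin
  set S := {μ : Measure X | IsFiniteMeasure μ ∧ MassBound T μ} with hSdef
  have hμstarS : μstar ∈ S := ⟨hμstarfin, hμstarmb⟩
  have hSne : S.Nonempty := ⟨μstar, hμstarS⟩
  set v := massMeasure T Set.univ with hvdef
  have hvle : v ≤ μstar Set.univ := massMeasure_univ_le hμstarfin hμstarmb
  have hvfin : v ≠ ⊤ := (hvle.trans_lt (measure_lt_top μstar _)).ne
  have hε4 : ENNReal.ofReal (η/4) ≠ 0 := by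
    simp only [ne_eq, ENNReal.ofReal_eq_zero, not_le]; linarith
  have hkey : v = ⨅ (t : ℕ → Set X) (_ : Set.univ ⊆ ⋃ n, t n),
      ∑' n, ⨅ μ' ∈ Measure.toOuterMeasure '' S, μ' (t n) := by
    rw [hvdef]
    show massMeasure T Set.univ = _
    rw [massMeasure, Measure.sInf_apply MeasurableSet.univ,
      OuterMeasure.sInf_apply (hSne.image _)]
  have hlt : (⨅ (t : ℕ → Set X) (_ : Set.univ ⊆ ⋃ n, t n),
      ∑' n, ⨅ μ' ∈ Measure.toOuterMeasure '' S, μ' (t n)) < v + ENNReal.ofReal (η/4) := by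
    rw [← hkey]; exact ENNReal.lt_add_right hvfin hε4
  obtain ⟨t, ht⟩ := iInf_lt_iff.1 hlt
  obtain ⟨hcover, htsum⟩ := iInf_lt_iff.1 ht
  -- simplify inner infima
  have hiInf : ∀ n, (⨅ μ' ∈ Measure.toOuterMeasure '' S, μ' (t n))
      = ⨅ μ ∈ S, μ (t n) := by
    intro n
    rw [iInf_image]
    exact iInf_congr fun μ => iInf_congr fun _ => by rw [Measure.coe_toOuterMeasure]
  set a : ℕ → ENNReal := fun n => ⨅ μ ∈ S, μ (t n) with hadef
  have htsum' : ∑' n, a n < v + ENNReal.ofReal (η/4) := by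
    refine lt_of_eq_of_lt ?_ htsum
    exact (tsum_congr fun n => (hiInf n).symm)
  have hane : ∀ n, a n ≠ ⊤ := by
    intro n
    have : a n ≤ μstar (t n) := iInf₂_le μstar hμstarS
    exact (this.trans_lt (measure_lt_top μstar _)).ne
  have hcn : ∀ n, ∃ μ' ∈ S, μ' (t n) < a n + ENNReal.ofReal (η/8 * (1/2)^n) := by
    intro n
    have he : ENNReal.ofReal (η/8 * (1/2)^n) ≠ 0 := by
      simp only [ne_eq, ENNReal.ofReal_eq_zero, not_le]; positivity
    have hlt2 : (⨅ μ ∈ S, μ (t n)) < a n + ENNReal.ofReal (η/8 * (1/2)^n) :=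
      (ENNReal.lt_add_right (hane n) he)
    obtain ⟨μ', hμ'⟩ := iInf_lt_iff.1 hlt2
    obtain ⟨hμ'S, hμ'lt⟩ := iInf_lt_iff.1 hμ'
    exact ⟨μ', hμ'S, hμ'lt⟩
  choose μn hμnS hμnlt using hcn
  set B : ℕ → Set X := fun n => toMeasurable (μn n) (t n) with hBdef
  have hBm : ∀ n, MeasurableSet (B n) := fun n => measurableSet_toMeasurable _ _
  have hBu : (⋃ n, B n) = Set.univ := by
    apply Set.eq_univ_of_univ_subset
    exact hcover.trans (Set.iUnion_mono fun n => subset_toMeasurable _ _)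
  set ν := Measure.sum (fun n => (μn n).restrict (B n)) with hνdef
  have hνuniv : ν Set.univ ≤ v + ENNReal.ofReal (η/2) := by
    rw [hνdef, Measure.sum_apply _ MeasurableSet.univ]
    have h1 : ∀ n, ((μn n).restrict (B n)) Set.univ = (μn n) (t n) := by
      intro n
      rw [Measure.restrict_apply_univ, hBdef]
      exact measure_toMeasurable _
    calc ∑' n, ((μn n).restrict (B n)) Set.univ
        = ∑' n, (μn n) (t n) := tsum_congr h1
      _ ≤ ∑' n, (a n + ENNReal.ofReal (η/8 * (1/2)^n)) :=
          ENNReal.tsum_le_tsum fun n => (hμnlt n).le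
      _ = (∑' n, a n) + ∑' n, ENNReal.ofReal (η/8 * (1/2)^n) := ENNReal.tsum_add
      _ ≤ (v + ENNReal.ofReal (η/4)) + ENNReal.ofReal (η/4) := by
          refine add_le_add htsum'.le ?_
          have hsummable : Summable (fun n : ℕ => η/8 * (1/2:ℝ)^n) :=
            summable_geometric_two.mul_left _
          have h2 : ∑' n : ℕ, η/8 * (1/2:ℝ)^n = η/4 := by
            rw [tsum_mul_left, tsum_geometric_two]; ring
          rw [← ENNReal.ofReal_tsum_of_nonneg (fun n => by positivity) hsummable, h2]
      _ = v + ENNReal.ofReal (η/2) := by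
          rw [add_assoc, ← ENNReal.ofReal_add (by linarith) (by linarith),
            show η/4 + η/4 = η/2 by ring]
  have hνfin : IsFiniteMeasure ν := by
    constructor
    exact hνuniv.trans_lt (by
      exact ENNReal.add_lt_top.2 ⟨hvfin.lt_top, ENNReal.ofReal_lt_top⟩)
  haveI := hνfin
  have hνmb : MassBound T ν := by
    rw [hνdef]
    haveI : IsFiniteMeasure (Measure.sum fun n => (μn n).restrict (B n)) := hνdef ▸ hνfin
    exact massBound_patch T hTadd μstar hμstarmb B hBm hBu μn (fun n => (hμnS n).1)
      (fun n => (hμnS n).2)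
  -- tightening
  obtain ⟨K, hKc, hKm⟩ : ∃ K : ℕ → Set X, (∀ m, IsCompact (K m)) ∧
      ∀ m, μstar (K m)ᶜ < ((m : ENNReal) + 1)⁻¹ := by
    have : ∀ m : ℕ, ∃ Km : Set X, IsCompact Km ∧ μstar Kmᶜ < ((m : ENNReal) + 1)⁻¹ := by
      intro m
      exact hμstartight _ (ENNReal.inv_pos.2 (by simp))
    choose K h1 h2 using this
    exact ⟨K, h1, h2⟩
  set A := ⋃ m, K m with hAdef
  have hAm : MeasurableSet A :=
    MeasurableSet.iUnion fun m => (hKc m).isClosed.measurableSet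
  have hμstarA : μstar Aᶜ = 0 := by
    by_contra h0
    obtain ⟨m, hm⟩ := ENNReal.exists_inv_nat_lt h0
    have h1 : μstar Aᶜ ≤ μstar (K m)ᶜ :=
      measure_mono (Set.compl_subset_compl.2 (Set.subset_iUnion K m))
    have h2 : ((m : ENNReal) + 1)⁻¹ ≤ ((m : ENNReal))⁻¹ :=
      ENNReal.inv_le_inv' (by simp)
    exact (hm.trans ((h1.trans_lt (hKm m)).trans_le h2)).false
  set ρ := ν.restrict A with hρdef
  have hρmb : MassBound T ρ := by
    set Bs : ℕ → Set X := fun n => if n = 0 then A else Aᶜ with hBsdef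
    set ms : ℕ → Measure X := fun n => if n = 0 then ν else μstar with hmsdef
    have heq : (Measure.sum fun n => (ms n).restrict (Bs n)) = ρ := by
      ext s hs
      rw [Measure.sum_apply _ hs]
      rw [tsum_eq_single 0 (fun n hn => ?_)]
      · simp [hmsdef, hBsdef, hρdef]
      · have : (ms n).restrict (Bs n) = μstar.restrict Aᶜ := by
          simp [hmsdef, hBsdef, hn]
        rw [this, Measure.restrict_eq_zero.2 hμstarA]
        rfl
    have hBsm : ∀ n, MeasurableSet (Bs n) := by
      intro n; by_cases hn : n = 0 <;> simp [hBsdef, hn, hAm, hAm.compl]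
    have hBsu : (⋃ n, Bs n) = Set.univ := by
      apply Set.eq_univ_of_forall
      intro x
      by_cases hx : x ∈ A
      · exact Set.mem_iUnion.2 ⟨0, by simp [hBsdef, hx]⟩
      · exact Set.mem_iUnion.2 ⟨1, by simp [hBsdef, hx]⟩
    have hmsfin : ∀ n, IsFiniteMeasure (ms n) := by
      intro n; by_cases hn : n = 0 <;> simp [hmsdef, hn] <;> infer_instance
    have hmsmb : ∀ n, MassBound T (ms n) := by
      intro n; by_cases hn : n = 0 <;> simp [hmsdef, hn] <;> [exact hνmb; exact hμstarmb]
    haveI : IsFiniteMeasure (Measure.sum fun n => (ms n).restrict (Bs n)) := by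
      rw [heq]; infer_instance
    have := massBound_patch T hTadd μstar hμstarmb Bs hBsm hBsu ms hmsfin hmsmb
    rwa [heq] at this
  have hρtight : IsTightMeasure ρ := by
    intro ε hε
    rcases eq_or_ne ε ⊤ with rfl | hεne
    · exact ⟨∅, isCompact_empty, (measure_lt_top ρ _).trans_le le_top⟩
    · have hKcm : ∀ m, MeasurableSet (⋃ i : Fin (m+1), K (i : ℕ)) := fun m =>
        MeasurableSet.iUnion fun i : Fin (m+1) => (hKc (i : ℕ)).isClosed.measurableSet
      set s : ℕ → Set X := fun m => A ∩ (⋃ i : Fin (m+1), K i)ᶜ with hsdef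
      have hsm : ∀ m, MeasurableSet (s m) := fun m => hAm.inter (hKcm m).compl
      have hsanti : Antitone s := by
        intro m m' hmm'
        refine Set.inter_subset_inter_right _ (Set.compl_subset_compl.2 ?_)
        exact Set.iUnion_mono' fun i => ⟨⟨i, by omega⟩, subset_rfl⟩
      have hsint : (⋂ m, s m) = ∅ := by
        rw [hsdef, ← Set.inter_iInter, ← Set.compl_iUnion]
        have : (⋃ m, ⋃ i : Fin (m+1), K i) = A := by
          apply Set.Subset.antisymm
          · exact Set.iUnion_subset fun m => Set.iUnion_subset fun i =>
              Set.subset_iUnion K i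
          · exact Set.iUnion_subset fun m => Set.subset_iUnion_of_subset m
              (Set.subset_iUnion_of_subset ⟨m, by omega⟩ subset_rfl)
        rw [this, Set.inter_compl_self]
      have htend := tendsto_measure_iInter_atTop (μ := ν)
        (fun m => (hsm m).nullMeasurableSet) hsanti ⟨0, measure_ne_top ν _⟩
      rw [hsint, measure_empty] at htend
      obtain ⟨m, hm⟩ := (htend.eventually_lt_const hε).exists
      refine ⟨⋃ i : Fin (m+1), K i, isCompact_iUnion fun i => hKc i, ?_⟩
      rw [hρdef, Measure.restrict_apply (hKcm m).compl, Set.inter_comm]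
      exact hm
  refine ⟨ρ, inferInstance, hρtight, hρmb, ?_⟩
  have : ρ Set.univ ≤ ν Set.univ := by
    rw [hρdef, Measure.restrict_apply_univ]
    exact measure_mono (Set.subset_univ A)
  refine this.trans (hνuniv.trans ?_)
  exact add_le_add_right (ENNReal.ofReal_le_ofReal (by linarith)) v

end Close

section Algebra

variable {X : Type*} [MetricSpace X] [MeasurableSpace X] [BorelSpace X] {k : ℕ}

lemma IsMultilinear.add' {T T' : Func X k} (hT : IsMultilinear T) (hT' : IsMultilinear T') :
    IsMultilinear (T + T') := by
  obtain ⟨h1, h2, h3, h4⟩ := hT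
  obtain ⟨h1', h2', h3', h4'⟩ := hT'
  refine ⟨fun f g π hf hg hπ => ?_, fun c f π hf hπ => ?_,
    fun f π i g g' hf hπ hg hg' => ?_, fun f π i c g hf hπ hg => ?_⟩
  · simp only [Pi.add_apply, h1 f g π hf hg hπ, h1' f g π hf hg hπ]; ring
  · simp only [Pi.add_apply, h2 c f π hf hπ, h2' c f π hf hπ]; ring
  · simp only [Pi.add_apply, h3 f π i g g' hf hπ hg hg', h3' f π i g g' hf hπ hg hg']; ring
  · simp only [Pi.add_apply, h4 f π i c g hf hπ hg, h4' f π i c g hf hπ hg]; ring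

lemma IsMultilinear.smul' {T : Func X k} (c : ℝ) (hT : IsMultilinear T) :
    IsMultilinear (c • T) := by
  obtain ⟨h1, h2, h3, h4⟩ := hT
  refine ⟨fun f g π hf hg hπ => ?_, fun c' f π hf hπ => ?_,
    fun f π i g g' hf hπ hg hg' => ?_, fun f π i c' g hf hπ hg => ?_⟩
  · simp only [Pi.smul_apply, smul_eq_mul, h1 f g π hf hg hπ]; ring
  · simp only [Pi.smul_apply, smul_eq_mul, h2 c' f π hf hπ]; ring
  · simp only [Pi.smul_apply, smul_eq_mul, h3 f π i g g' hf hπ hg hg']; ring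
  · simp only [Pi.smul_apply, smul_eq_mul, h4 f π i c' g hf hπ hg]; ring

lemma massBound_add {T T' : Func X k} {μ μ' : Measure X}
    (hfin : IsFiniteMeasure μ) (hfin' : IsFiniteMeasure μ')
    (h : MassBound T μ) (h' : MassBound T' μ') : MassBound (T + T') (μ + μ') := by
  haveI := hfin; haveI := hfin'
  intro f π hdom
  have h1 := h f π hdom
  have h2 := h' f π hdom
  have h3 : ∫ x, |f x| ∂(μ + μ') = ∫ x, |f x| ∂μ + ∫ x, |f x| ∂μ' :=
    integral_add_measure (hdom.1.integrable_abs μ) (hdom.1.integrable_abs μ')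
  have h4 : |(T + T') f π| ≤ |T f π| + |T' f π| := by
    simp only [Pi.add_apply]; exact abs_add_le _ _
  rw [h3]
  calc |(T + T') f π| ≤ |T f π| + |T' f π| := h4
    _ ≤ _ := by rw [mul_add]; exact add_le_add h1 h2

lemma massBound_sub {T T' : Func X k} {μ μ' : Measure X}
    (hfin : IsFiniteMeasure μ) (hfin' : IsFiniteMeasure μ')
    (h : MassBound T μ) (h' : MassBound T' μ') : MassBound (T - T') (μ + μ') := by
  haveI := hfin; haveI := hfin'
  intro f π hdom
  have h1 := h f π hdom
  have h2 := h' f π hdom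
  have h3 : ∫ x, |f x| ∂(μ + μ') = ∫ x, |f x| ∂μ + ∫ x, |f x| ∂μ' :=
    integral_add_measure (hdom.1.integrable_abs μ) (hdom.1.integrable_abs μ')
  have h4 : |(T - T') f π| ≤ |T f π| + |T' f π| := by
    simp only [Pi.sub_apply]; exact abs_sub _ _
  rw [h3]
  calc |(T - T') f π| ≤ |T f π| + |T' f π| := h4
    _ ≤ _ := by rw [mul_add]; exact add_le_add h1 h2

lemma massBound_smul {T : Func X k} {μ : Measure X} (c : ℝ)
    (h : MassBound T μ) : MassBound (c • T) (ENNReal.ofReal |c| • μ) := by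
  intro f π hdom
  have h1 := h f π hdom
  have h2 : ∫ x, |f x| ∂(ENNReal.ofReal |c| • μ) = |c| * ∫ x, |f x| ∂μ := by
    rw [integral_smul_measure, ENNReal.toReal_ofReal (abs_nonneg c), smul_eq_mul]
  rw [h2]
  simp only [Pi.smul_apply, smul_eq_mul, abs_mul]
  calc |c| * |T f π| ≤ |c| * ((∏ i, (lipConst (π i) : ℝ)) * ∫ x, |f x| ∂μ) :=
        mul_le_mul_of_nonneg_left h1 (abs_nonneg c)
    _ = _ := by ring

lemma HasFiniteMass.add {T T' : Func X k} (h : HasFiniteMass T) (h' : HasFiniteMass T') :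
    HasFiniteMass (T + T') := by
  obtain ⟨μ, hfin, htight, hmb⟩ := h
  obtain ⟨μ', hfin', htight', hmb'⟩ := h'
  haveI := hfin; haveI := hfin'
  exact ⟨μ + μ', inferInstance, isTight_add htight htight', massBound_add hfin hfin' hmb hmb'⟩

lemma HasFiniteMass.smul {T : Func X k} (c : ℝ) (h : HasFiniteMass T) :
    HasFiniteMass (c • T) := by
  obtain ⟨μ, hfin, htight, hmb⟩ := h
  haveI := hfin
  exact ⟨ENNReal.ofReal |c| • μ, μ.smul_finite ENNReal.ofReal_ne_top,
    isTight_smul htight ENNReal.ofReal_ne_top, massBound_smul c hmb⟩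

lemma MemDk.add {T T' : Func X k} (h : MemDk T) (h' : MemDk T') : MemDk (T + T') :=
  ⟨h.1.add' h'.1, h.2.add h'.2⟩

lemma MemDk.smul {T : Func X k} (c : ℝ) (h : MemDk T) : MemDk (c • T) :=
  ⟨h.1.smul' c, h.2.smul c⟩

lemma sub_eq_add_neg_smul (T T' : Func X k) : T - T' = T + (-1 : ℝ) • T' := by
  funext f π
  simp only [Pi.sub_apply, Pi.add_apply, Pi.smul_apply, smul_eq_mul]
  ring

lemma MemDk.sub {T T' : Func X k} (h : MemDk T) (h' : MemDk T') : MemDk (T - T') := by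
  rw [sub_eq_add_neg_smul]
  exact h.add (h'.smul (-1))

/-- key consequence of `exists_close`: values are controlled by mass. -/
lemma abs_le_mass {T : Func X k} (h : MemDk T) {f : X → ℝ} {π : Fin k → X → ℝ}
    (hdom : InDomain f π) {C : ℝ} (hC : ∀ x, |f x| ≤ C) (hC0 : 0 ≤ C) {δ : ℝ} (hδ : 0 < δ) :
    |T f π| ≤ (∏ i, (lipConst (π i) : ℝ)) * (C * ((massMeasure T Set.univ).toReal + δ)) := by
  obtain ⟨μ, hfin, _, hmb, hle⟩ := exists_close T h.1.1 h.2 hδ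
  haveI := hfin
  have h1 := hmb f π hdom
  have h2 : ∫ x, |f x| ∂μ ≤ C * (μ Set.univ).toReal := integral_abs_le_const hC μ
  have h3 : (μ Set.univ).toReal ≤ (massMeasure T Set.univ).toReal + δ := by
    have hne : massMeasure T Set.univ ≠ ⊤ := massMeasure_univ_ne_top h.2
    calc (μ Set.univ).toReal
        ≤ (massMeasure T Set.univ + ENNReal.ofReal δ).toReal :=
          ENNReal.toReal_mono (by simp [hne, ENNReal.add_eq_top]) hle
      _ = (massMeasure T Set.univ).toReal + δ := by
          rw [ENNReal.toReal_add hne ENNReal.ofReal_ne_top, ENNReal.toReal_ofReal hδ.le]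
  refine h1.trans (mul_le_mul_of_nonneg_left ?_ (prodLip_nonneg π))
  exact h2.trans (mul_le_mul_of_nonneg_left h3 hC0)

end Algebra

section TightSum

variable {X : Type*} [MetricSpace X] [MeasurableSpace X] [BorelSpace X] {k : ℕ}

lemma tsum_split (f : ℕ → ENNReal) (I : ℕ) :
    ∑' i, f i = (∑ i ∈ Finset.range I, f i) + ∑' i, f (i + I) :=
  ((ENNReal.summable.hasSum (f := fun i => f (i + I))).sum_range_add).tsum_eq

lemma isTight_sum (σ : ℕ → Measure X) (htight : ∀ i, IsTightMeasure (σ i))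
    (hfin : (∑' i, σ i Set.univ) ≠ ⊤) : IsTightMeasure (Measure.sum σ) := by
  have hsumuniv : (Measure.sum σ) Set.univ = ∑' i, σ i Set.univ :=
    Measure.sum_apply _ MeasurableSet.univ
  intro ε hε
  rcases eq_or_ne ε ⊤ with rfl | hεne
  · refine ⟨∅, isCompact_empty, ?_⟩
    calc (Measure.sum σ) ∅ᶜ ≤ (Measure.sum σ) Set.univ := measure_mono (Set.subset_univ _)
      _ < ⊤ := by rw [hsumuniv]; exact hfin.lt_top
  · have hq : (0:ENNReal) < ε / 2 / 2 :=
      ENNReal.div_pos (ENNReal.div_pos hε.ne' (by norm_num)).ne' (by norm_num)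
    have htail := ENNReal.tendsto_sum_nat_add (fun i => σ i Set.univ) hfin
    obtain ⟨I, hI⟩ := (htail.eventually_lt_const hq).exists
    set e : ENNReal := (ε / 2 / 2) / I with hedef
    have hepos : 0 < e := ENNReal.div_pos hq.ne' (by simp)
    have hKi : ∀ i : ℕ, ∃ K : Set X, IsCompact K ∧ σ i Kᶜ < e := fun i => htight i e hepos
    choose K hKc hKb using hKi
    refine ⟨⋃ i : Fin I, K (i : ℕ), isCompact_iUnion fun i => hKc (i : ℕ), ?_⟩
    have hKm : MeasurableSet (⋃ i : Fin I, K (i : ℕ)) :=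
      MeasurableSet.iUnion fun i : Fin I => (hKc (i : ℕ)).isClosed.measurableSet
    have hsplit : (Measure.sum σ) (⋃ i : Fin I, K (i : ℕ))ᶜ
        = ∑' i, σ i (⋃ i : Fin I, K (i : ℕ))ᶜ := Measure.sum_apply _ hKm.compl
    rw [hsplit, tsum_split _ I]
    have h1 : ∑ i ∈ Finset.range I, σ i (⋃ i : Fin I, K (i : ℕ))ᶜ ≤ ε / 2 / 2 := by
      have hterm : ∀ i ∈ Finset.range I, σ i (⋃ j : Fin I, K (j : ℕ))ᶜ ≤ e := by
        intro i hi
        refine le_trans (measure_mono (Set.compl_subset_compl.2 ?_)) (hKb i).le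
        exact Set.subset_iUnion_of_subset ⟨i, Finset.mem_range.1 hi⟩ subset_rfl
      calc ∑ i ∈ Finset.range I, σ i (⋃ i : Fin I, K (i : ℕ))ᶜ
          ≤ ∑ _i ∈ Finset.range I, e := Finset.sum_le_sum hterm
        _ = (I : ENNReal) * e := by rw [Finset.sum_const, Finset.card_range, nsmul_eq_mul]
        _ ≤ ε / 2 / 2 := ENNReal.mul_div_le
    have h2 : ∑' i, σ (i + I) (⋃ i : Fin I, K (i : ℕ))ᶜ ≤ ε / 2 / 2 := by
      refine le_trans (ENNReal.tsum_le_tsum fun i => measure_mono (Set.subset_univ _)) hI.le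
    calc (∑ i ∈ Finset.range I, σ i (⋃ i : Fin I, K (i : ℕ))ᶜ)
        + ∑' i, σ (i + I) (⋃ i : Fin I, K (i : ℕ))ᶜ
        ≤ ε / 2 / 2 + ε / 2 / 2 := add_le_add h1 h2
      _ = ε / 2 := ENNReal.add_halves _
      _ < ε := ENNReal.half_lt_self hε.ne' hεne

end TightSum

section Complete

variable {X : Type*} [MetricSpace X] [MeasurableSpace X] [BorelSpace X] {k : ℕ}

lemma dk_complete (Ts : ℕ → Func X k) (hTs : ∀ n, MemDk (Ts n))
    (hC : ∀ ε : ℝ, 0 < ε → ∃ N : ℕ, ∀ m ≥ N, ∀ n ≥ N,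
      massMeasure (Ts m - Ts n) Set.univ < ENNReal.ofReal ε) :
    ∃ T : Func X k, MemDk T ∧
      Tendsto (fun n => massMeasure (Ts n - T) Set.univ) atTop (nhds 0) := by
  classical
  have hsub : ∀ m n, MemDk (Ts m - Ts n) := fun m n => (hTs m).sub (hTs n)
  -- pointwise Cauchy
  have hcauchy : ∀ f π, InDomain f π → CauchySeq (fun n => Ts n f π) := by
    intro f π hdom
    obtain ⟨Cf, hCf⟩ := hdom.1.2
    set Cb : ℝ := max Cf 0 with hCbdef
    have hCb : ∀ x, |f x| ≤ Cb := fun x => (hCf x).trans (le_max_left _ _)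
    have hCb0 : (0:ℝ) ≤ Cb := le_max_right _ _
    set P : ℝ := ∏ i, (lipConst (π i) : ℝ) with hPdef
    have hP : 0 ≤ P := prodLip_nonneg π
    rw [Metric.cauchySeq_iff]
    intro ε hε
    set ε' : ℝ := ε / (2 * (P * Cb) + 2) with hε'def
    have hden : (0:ℝ) < 2 * (P * Cb) + 2 := by nlinarith
    have hε' : 0 < ε' := div_pos hε hden
    obtain ⟨N, hN⟩ := hC ε' hε'
    refine ⟨N, fun m hm n hn => ?_⟩
    have hmass := hN m hm n hn
    have hb := abs_le_mass (hsub m n) hdom hCb hCb0 hε'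
    have ht : (massMeasure (Ts m - Ts n) Set.univ).toReal ≤ ε' := by
      have := ENNReal.toReal_mono ENNReal.ofReal_ne_top hmass.le
      rwa [ENNReal.toReal_ofReal hε'.le] at this
    have hb2 : |(Ts m - Ts n) f π| ≤ P * (Cb * (ε' + ε')) := by
      refine hb.trans (mul_le_mul_of_nonneg_left (mul_le_mul_of_nonneg_left ?_ hCb0) hP)
      linarith
    rw [Real.dist_eq]
    have hsubapp : (Ts m - Ts n) f π = Ts m f π - Ts n f π := rfl
    rw [hsubapp] at hb2
    have hfinal : P * (Cb * (ε' + ε')) < ε := by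
      have he : P * (Cb * (ε' + ε')) = (2 * (P * Cb)) * ε / (2 * (P * Cb) + 2) := by
        rw [hε'def]; ring
      rw [he, div_lt_iff₀ hden]
      nlinarith [mul_nonneg hP hCb0]
    exact hb2.trans_lt hfinal
  -- the limit functional
  set T : Func X k := fun f π => limUnder atTop (fun n => Ts n f π) with hTdef
  have hconv : ∀ f π, InDomain f π → Tendsto (fun n => Ts n f π) atTop (nhds (T f π)) :=
    fun f π hdom => tendsto_nhds_limUnder (cauchySeq_tendsto_of_complete (hcauchy f π hdom))
  -- multilinearity
  have hmulti : IsMultilinear T := by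
    refine ⟨fun f g π hf hg hπ => ?_, fun c f π hf hπ => ?_,
      fun f π i g g' hf hπ hg hg' => ?_, fun f π i c g hf hπ hg => ?_⟩
    · have h1 := hconv (f + g) π ⟨hf.add hg, hπ⟩
      have h2 := (hconv f π ⟨hf, hπ⟩).add (hconv g π ⟨hg, hπ⟩)
      have h3 : Tendsto (fun n => Ts n (f + g) π) atTop (nhds (T f π + T g π)) :=
        h2.congr fun n => ((hTs n).1.1 f g π hf hg hπ).symm
      exact tendsto_nhds_unique h1 h3
    · have h1 := hconv (c • f) π ⟨hf.smul c, hπ⟩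
      have h2 := (hconv f π ⟨hf, hπ⟩).const_mul c
      have h3 : Tendsto (fun n => Ts n (c • f) π) atTop (nhds (c * T f π)) :=
        h2.congr fun n => ((hTs n).1.2.1 c f π hf hπ).symm
      exact tendsto_nhds_unique h1 h3
    · have d1 : InDomain f (Function.update π i (g + g')) :=
        ⟨hf, isLip_update hπ (hg.add hg') i⟩
      have d2 : InDomain f (Function.update π i g) := ⟨hf, isLip_update hπ hg i⟩
      have d3 : InDomain f (Function.update π i g') := ⟨hf, isLip_update hπ hg' i⟩
      have h1 := hconv f _ d1
      have h2 := (hconv f _ d2).add (hconv f _ d3)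
      have h3 : Tendsto (fun n => Ts n f (Function.update π i (g + g'))) atTop
          (nhds (T f (Function.update π i g) + T f (Function.update π i g'))) :=
        h2.congr fun n => ((hTs n).1.2.2.1 f π i g g' hf hπ hg hg').symm
      exact tendsto_nhds_unique h1 h3
    · have d1 : InDomain f (Function.update π i (c • g)) :=
        ⟨hf, isLip_update hπ (hg.smul c) i⟩
      have d2 : InDomain f (Function.update π i g) := ⟨hf, isLip_update hπ hg i⟩
      have h1 := hconv f _ d1
      have h2 := (hconv f _ d2).const_mul c
      have h3 : Tendsto (fun n => Ts n f (Function.update π i (c • g))) atTop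
          (nhds (c * T f (Function.update π i g))) :=
        h2.congr fun n => ((hTs n).1.2.2.2 f π i c g hf hπ hg).symm
      exact tendsto_nhds_unique h1 h3
  -- choose a rapidly Cauchy subsequence
  have hNj : ∀ j : ℕ, ∃ N : ℕ, ∀ m ≥ N, ∀ n ≥ N,
      massMeasure (Ts m - Ts n) Set.univ < ENNReal.ofReal ((1/2)^(j+1)) :=
    fun j => hC _ (by positivity)
  choose N hNs using hNj
  set idx : ℕ → ℕ := fun j => Nat.rec (N 0) (fun j ih => max (N (j+1)) (ih + 1)) j with hidxdef
  have hidxsucc : ∀ j, idx (j+1) = max (N (j+1)) (idx j + 1) := fun j => rfl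
  have hmono : StrictMono idx := strictMono_nat_of_lt_succ fun j => by
    rw [hidxsucc]
    exact lt_of_lt_of_le (Nat.lt_succ_self _) (le_max_right _ _)
  have hidxN : ∀ j, N j ≤ idx j := by
    intro j
    cases j with
    | zero => exact le_rfl
    | succ j => rw [hidxsucc]; exact le_max_left _ _
  have hidxprop : ∀ j, ∀ m ≥ idx j, ∀ n ≥ idx j,
      massMeasure (Ts m - Ts n) Set.univ < ENNReal.ofReal ((1/2)^(j+1)) :=
    fun j m hm n hn => hNs j m (le_trans (hidxN j) hm) n (le_trans (hidxN j) hn)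
  -- the telescoping measures
  have hσex : ∀ j : ℕ, ∃ σ : Measure X, IsFiniteMeasure σ ∧ IsTightMeasure σ ∧
      MassBound (Ts (idx (j+1)) - Ts (idx j)) σ ∧
      σ Set.univ ≤ ENNReal.ofReal ((1/2)^j) := by
    intro j
    have hm := hidxprop j (idx (j+1)) (hmono.monotone (Nat.le_succ j)) (idx j) le_rfl
    obtain ⟨σ, hfin, htight, hmb, hle⟩ :=
      exists_close (Ts (idx (j+1)) - Ts (idx j)) (hsub _ _).1.1 (hsub _ _).2
        (by positivity : (0:ℝ) < (1/2)^(j+1))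
    refine ⟨σ, hfin, htight, hmb, ?_⟩
    calc σ Set.univ ≤ massMeasure (Ts (idx (j+1)) - Ts (idx j)) Set.univ
          + ENNReal.ofReal ((1/2)^(j+1)) := hle
      _ ≤ ENNReal.ofReal ((1/2)^(j+1)) + ENNReal.ofReal ((1/2)^(j+1)) :=
          add_le_add_left hm.le _
      _ = ENNReal.ofReal ((1/2)^j) := by
          rw [← ENNReal.ofReal_add (by positivity) (by positivity)]
          congr 1
          ring
  choose σ hσfin hσtight hσmb hσuniv using hσex
  set ν : ℕ → Measure X := fun j => Measure.sum (fun i => σ (j + i)) with hνdef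
  have hνuniv : ∀ j, ν j Set.univ ≤ ENNReal.ofReal (2 * (1/2)^j) := by
    intro j
    rw [hνdef, Measure.sum_apply _ MeasurableSet.univ]
    calc ∑' i, σ (j + i) Set.univ ≤ ∑' i, ENNReal.ofReal ((1/2)^(j+i)) :=
          ENNReal.tsum_le_tsum fun i => hσuniv (j + i)
      _ = ENNReal.ofReal (∑' i, (1/2:ℝ)^(j+i)) :=
          (ENNReal.ofReal_tsum_of_nonneg (fun i => by positivity)
            (by simpa [pow_add] using (summable_geometric_two.mul_left ((1/2:ℝ)^j)))).symm
      _ = ENNReal.ofReal (2 * (1/2)^j) := by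
          congr 1
          have : ∀ i : ℕ, (1/2:ℝ)^(j+i) = (1/2)^j * (1/2)^i := fun i => pow_add _ _ _
          rw [tsum_congr this, tsum_mul_left, tsum_geometric_two]
          ring
  have hνfin : ∀ j, IsFiniteMeasure (ν j) := by
    intro j
    constructor
    exact (hνuniv j).trans_lt ENNReal.ofReal_lt_top
  have hνtight : ∀ j, IsTightMeasure (ν j) := by
    intro j
    rw [hνdef]
    refine isTight_sum _ (fun i => hσtight (j + i)) ?_
    have h1 : (∑' i, σ (j + i) Set.univ) = ν j Set.univ := by
      rw [hνdef, Measure.sum_apply _ MeasurableSet.univ]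
    rw [h1]
    exact ((hνuniv j).trans_lt ENNReal.ofReal_lt_top).ne
  -- telescoping bound
  have hseg : ∀ (j d : ℕ) (f : X → ℝ) (π : Fin k → X → ℝ), InDomain f π →
      |Ts (idx (j+d)) f π - Ts (idx j) f π| ≤
        (∏ i, (lipConst (π i) : ℝ)) * ∑ i ∈ Finset.range d, ∫ x, |f x| ∂(σ (j + i)) := by
    intro j d f π hdom
    induction d with
    | zero =>
      simp only [Nat.add_zero, sub_self, abs_zero, Finset.range_zero, Finset.sum_empty,
        mul_zero, le_refl]
    | succ d ih =>
      have h1 : |Ts (idx (j+d+1)) f π - Ts (idx (j+d)) f π| ≤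
          (∏ i, (lipConst (π i) : ℝ)) * ∫ x, |f x| ∂(σ (j + d)) :=
        hσmb (j + d) f π hdom
      have h2 : |Ts (idx (j+(d+1))) f π - Ts (idx j) f π| ≤
          |Ts (idx (j+d+1)) f π - Ts (idx (j+d)) f π| +
          |Ts (idx (j+d)) f π - Ts (idx j) f π| := by
        rw [show j + (d+1) = j + d + 1 by ring]
        exact (abs_sub_le _ _ _).trans_eq rfl
      refine h2.trans ?_
      rw [Finset.sum_range_succ, mul_add]
      linarith [add_le_add h1 ih]
  have hsegν : ∀ (j d : ℕ) (f : X → ℝ) (π : Fin k → X → ℝ), InDomain f π →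
      |Ts (idx (j+d)) f π - Ts (idx j) f π| ≤
        (∏ i, (lipConst (π i) : ℝ)) * ∫ x, |f x| ∂(ν j) := by
    intro j d f π hdom
    refine (hseg j d f π hdom).trans (mul_le_mul_of_nonneg_left ?_ (prodLip_nonneg π))
    haveI := hνfin j
    have hint : Integrable (fun x => |f x|) (ν j) := hdom.1.integrable_abs (ν j)
    have hhs : HasSum (fun i => ∫ x, |f x| ∂(σ (j + i))) (∫ x, |f x| ∂(ν j)) :=
      hasSum_integral_measure (μ := fun i => σ (j + i)) hint
    exact sum_le_hasSum _ (fun i _ => integral_abs_nonneg _ _) hhs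
  -- mass bound for the limit differences
  have hmblimit : ∀ j, MassBound (Ts (idx j) - T) (ν j) := by
    intro j f π hdom
    have htendidx : Tendsto (fun d => idx (j + d)) atTop atTop := by
      have h1 : Tendsto (fun d : ℕ => j + d) atTop atTop := by
        simpa [add_comm] using tendsto_add_atTop_nat j
      exact hmono.tendsto_atTop.comp h1
    have hlim : Tendsto (fun d => Ts (idx (j+d)) f π) atTop (nhds (T f π)) :=
      (hconv f π hdom).comp htendidx
    have habs : Tendsto (fun d => |Ts (idx (j+d)) f π - Ts (idx j) f π|) atTop
        (nhds (|T f π - Ts (idx j) f π|)) :=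
      ((hlim.sub tendsto_const_nhds).abs)
    have hle := le_of_tendsto habs
      (Filter.Eventually.of_forall fun d => hsegν j d f π hdom)
    have heq : |(Ts (idx j) - T) f π| = |T f π - Ts (idx j) f π| := by
      rw [show (Ts (idx j) - T) f π = Ts (idx j) f π - T f π from rfl, abs_sub_comm]
    rw [heq]
    exact hle
  -- finite mass for T
  have hfm : HasFiniteMass T := by
    obtain ⟨μ0, hμ0fin, hμ0tight, hμ0mb⟩ := (hTs (idx 0)).2
    haveI := hμ0fin; haveI := hνfin 0
    refine ⟨μ0 + ν 0, inferInstance, isTight_add hμ0tight (hνtight 0), ?_⟩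
    intro f π hdom
    have h1 := hμ0mb f π hdom
    have h2 := hmblimit 0 f π hdom
    have h3 : ∫ x, |f x| ∂(μ0 + ν 0) = ∫ x, |f x| ∂μ0 + ∫ x, |f x| ∂(ν 0) :=
      integral_add_measure (hdom.1.integrable_abs μ0) (hdom.1.integrable_abs (ν 0))
    have h4 : |T f π| ≤ |Ts (idx 0) f π| + |(Ts (idx 0) - T) f π| := by
      rw [show (Ts (idx 0) - T) f π = Ts (idx 0) f π - T f π from rfl]
      have := abs_sub (Ts (idx 0) f π) (Ts (idx 0) f π - T f π)
      calc |T f π| = |Ts (idx 0) f π - (Ts (idx 0) f π - T f π)| := by ring_nf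
        _ ≤ |Ts (idx 0) f π| + |Ts (idx 0) f π - T f π| := abs_sub _ _
    rw [h3, mul_add]
    exact h4.trans (add_le_add h1 h2)
  refine ⟨T, ⟨hmulti, hfm⟩, ?_⟩
  -- convergence in mass
  rw [ENNReal.tendsto_atTop_zero]
  intro ε hε
  rcases eq_or_ne ε ⊤ with rfl | hεne
  · exact ⟨0, fun n _ => le_top⟩
  · have hεr : 0 < ε.toReal := ENNReal.toReal_pos hε.ne' hεne
    obtain ⟨j, hj⟩ := exists_pow_lt_of_lt_one (show (0:ℝ) < ε.toReal / 4 by linarith)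
      (show (1/2 : ℝ) < 1 by norm_num)
    refine ⟨idx j, fun n hn => ?_⟩
    -- build the dominating measure for Ts n - T
    have hmass := hidxprop j n hn (idx j) le_rfl
    obtain ⟨μn, hμnfin, _, hμnmb, hμnle⟩ :=
      exists_close (Ts n - Ts (idx j)) (hsub _ _).1.1 (hsub _ _).2
        (by positivity : (0:ℝ) < (1/2)^(j+1))
    haveI := hμnfin; haveI := hνfin j
    have hμnuniv : μn Set.univ ≤ ENNReal.ofReal ((1/2)^j) := by
      calc μn Set.univ ≤ massMeasure (Ts n - Ts (idx j)) Set.univ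
            + ENNReal.ofReal ((1/2)^(j+1)) := hμnle
        _ ≤ ENNReal.ofReal ((1/2)^(j+1)) + ENNReal.ofReal ((1/2)^(j+1)) :=
            add_le_add_left hmass.le _
        _ = ENNReal.ofReal ((1/2)^j) := by
            rw [← ENNReal.ofReal_add (by positivity) (by positivity)]
            congr 1
            ring
    have hmb : MassBound (Ts n - T) (μn + ν j) := by
      intro f π hdom
      have h1 := hμnmb f π hdom
      have h2 := hmblimit j f π hdom
      have h3 : ∫ x, |f x| ∂(μn + ν j) = ∫ x, |f x| ∂μn + ∫ x, |f x| ∂(ν j) :=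
        integral_add_measure (hdom.1.integrable_abs μn) (hdom.1.integrable_abs (ν j))
      have h4 : |(Ts n - T) f π| ≤ |(Ts n - Ts (idx j)) f π| + |(Ts (idx j) - T) f π| := by
        rw [show (Ts n - T) f π = Ts n f π - T f π from rfl,
          show (Ts n - Ts (idx j)) f π = Ts n f π - Ts (idx j) f π from rfl,
          show (Ts (idx j) - T) f π = Ts (idx j) f π - T f π from rfl]
        exact abs_sub_le _ _ _
      rw [h3, mul_add]
      exact h4.trans (add_le_add h1 h2)
    have hle := massMeasure_univ_le (μ := μn + ν j) inferInstance hmb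
    refine hle.trans ?_
    rw [Measure.add_apply]
    calc μn Set.univ + ν j Set.univ
        ≤ ENNReal.ofReal ((1/2)^j) + ENNReal.ofReal (2 * (1/2)^j) :=
          add_le_add hμnuniv (hνuniv j)
      _ = ENNReal.ofReal (3 * (1/2)^j) := by
          rw [← ENNReal.ofReal_add (by positivity) (by positivity)]
          congr 1
          ring
      _ ≤ ε := by
        refine ENNReal.ofReal_le_of_le_toReal ?_
        nlinarith [hj, pow_pos (show (0:ℝ) < 1/2 by norm_num) j]

end Complete

section Main

variable {X : Type*} [MetricSpace X] [MeasurableSpace X] [BorelSpace X] {k : ℕ}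

lemma mass_zero_iff (T : Func X k) (hT : MemDk T) :
    massMeasure T Set.univ = 0 ↔ DkEq T 0 := by
  constructor
  · intro h f π hdom
    simp only [Pi.zero_apply]
    obtain ⟨Cf, hCf⟩ := hdom.1.2
    set C : ℝ := max Cf 0 with hCdef
    have hC : ∀ x, |f x| ≤ C := fun x => (hCf x).trans (le_max_left _ _)
    have hC0 : (0:ℝ) ≤ C := le_max_right _ _
    set P : ℝ := ∏ i, (lipConst (π i) : ℝ) with hPdef
    have hP : 0 ≤ P := prodLip_nonneg π
    by_contra habs
    have hpos : 0 < |T f π| := abs_pos.2 habs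
    set δ : ℝ := |T f π| / (2 * (P * C + 1)) with hδdef
    have hden : (0:ℝ) < 2 * (P * C + 1) := by nlinarith
    have hδpos : 0 < δ := div_pos hpos hden
    have hb := abs_le_mass hT hdom hC hC0 hδpos
    rw [h] at hb
    simp only [ENNReal.toReal_zero, zero_add] at hb
    have h3 : P * (C * δ) < |T f π| := by
      have he : P * (C * δ) = (P * C * |T f π|) / (2 * (P * C + 1)) := by
        rw [hδdef]; ring
      rw [he, div_lt_iff₀ hden]
      nlinarith
    exact absurd (hb.trans_lt h3) (lt_irrefl _)
  · intro h
    refine le_antisymm ?_ (zero_le)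
    have hmb : MassBound T 0 := by
      intro f π hdom
      rw [h f π hdom]
      simp only [Pi.zero_apply, abs_zero, integral_zero_measure, mul_zero, le_refl]
    have := massMeasure_univ_le (μ := 0) inferInstance hmb
    simpa using this

lemma mass_smul_le (c : ℝ) (T : Func X k) (hT : MemDk T) :
    massMeasure (c • T) Set.univ ≤ ENNReal.ofReal |c| * massMeasure T Set.univ := by
  refine ENNReal.le_of_forall_pos_le_add fun ε hε hfin => ?_
  have hη : (0:ℝ) < (ε : ℝ) / (|c| + 1) := by positivity
  obtain ⟨μ, hfin', _, hmb, hle⟩ := exists_close T hT.1.1 hT.2 hη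
  haveI := hfin'
  have h1 : massMeasure (c • T) Set.univ ≤ (ENNReal.ofReal |c| • μ) Set.univ :=
    massMeasure_univ_le (μ.smul_finite ENNReal.ofReal_ne_top) (massBound_smul c hmb)
  have h2 : (ENNReal.ofReal |c| • μ) Set.univ = ENNReal.ofReal |c| * μ Set.univ := by
    simp [Measure.smul_apply]
  refine h1.trans ?_
  rw [h2]
  calc ENNReal.ofReal |c| * μ Set.univ
      ≤ ENNReal.ofReal |c| * (massMeasure T Set.univ + ENNReal.ofReal ((ε:ℝ)/(|c|+1))) :=
        mul_le_mul_right hle _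
    _ = ENNReal.ofReal |c| * massMeasure T Set.univ
        + ENNReal.ofReal |c| * ENNReal.ofReal ((ε:ℝ)/(|c|+1)) := by rw [mul_add]
    _ ≤ ENNReal.ofReal |c| * massMeasure T Set.univ + ↑ε := by
        refine add_le_add_right ?_ _
        rw [← ENNReal.ofReal_mul (abs_nonneg c), ← ENNReal.ofReal_coe_nnreal]
        refine ENNReal.ofReal_le_ofReal ?_
        rw [← mul_div_assoc, div_le_iff₀ (by positivity)]
        nlinarith [abs_nonneg c, ε.coe_nonneg]

lemma mass_smul_eq (c : ℝ) (T : Func X k) (hT : MemDk T) :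
    massMeasure (c • T) Set.univ = ENNReal.ofReal |c| * massMeasure T Set.univ := by
  rcases eq_or_ne c 0 with rfl | hc
  · have h0 : (0:ℝ) • T = (0 : Func X k) := by
      funext f π; simp
    have : DkEq ((0:ℝ) • T) 0 := by
      intro f π _; rw [h0]
    have hmem : MemDk ((0:ℝ) • T) := hT.smul 0
    rw [(mass_zero_iff _ hmem).2 this]
    simp
  · refine le_antisymm (mass_smul_le c T hT) ?_
    have hinv := mass_smul_le c⁻¹ (c • T) (hT.smul c)
    have heq : c⁻¹ • (c • T) = T := by
      rw [smul_smul, inv_mul_cancel₀ hc, one_smul]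
    rw [heq] at hinv
    have hmul : ENNReal.ofReal |c| * ENNReal.ofReal |c⁻¹| = 1 := by
      rw [← ENNReal.ofReal_mul (abs_nonneg c), ← abs_mul, mul_inv_cancel₀ hc]
      simp
    calc ENNReal.ofReal |c| * massMeasure T Set.univ
        ≤ ENNReal.ofReal |c| * (ENNReal.ofReal |c⁻¹| * massMeasure (c • T) Set.univ) :=
          mul_le_mul_right hinv _
      _ = (ENNReal.ofReal |c| * ENNReal.ofReal |c⁻¹|) * massMeasure (c • T) Set.univ := by
          rw [mul_assoc]
      _ = massMeasure (c • T) Set.univ := by rw [hmul, one_mul]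

lemma mass_add_le (T T' : Func X k) (hT : MemDk T) (hT' : MemDk T') :
    massMeasure (T + T') Set.univ ≤ massMeasure T Set.univ + massMeasure T' Set.univ := by
  refine ENNReal.le_of_forall_pos_le_add fun ε hε hfin => ?_
  have hη : (0:ℝ) < (ε : ℝ) / 2 := by positivity
  obtain ⟨μ, hfin1, _, hmb1, hle1⟩ := exists_close T hT.1.1 hT.2 hη
  obtain ⟨μ', hfin2, _, hmb2, hle2⟩ := exists_close T' hT'.1.1 hT'.2 hη
  haveI := hfin1; haveI := hfin2
  have h1 : massMeasure (T + T') Set.univ ≤ (μ + μ') Set.univ :=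
    massMeasure_univ_le inferInstance (massBound_add hfin1 hfin2 hmb1 hmb2)
  refine h1.trans ?_
  rw [Measure.add_apply]
  calc μ Set.univ + μ' Set.univ
      ≤ (massMeasure T Set.univ + ENNReal.ofReal ((ε:ℝ)/2))
        + (massMeasure T' Set.univ + ENNReal.ofReal ((ε:ℝ)/2)) := add_le_add hle1 hle2
    _ = massMeasure T Set.univ + massMeasure T' Set.univ
        + (ENNReal.ofReal ((ε:ℝ)/2) + ENNReal.ofReal ((ε:ℝ)/2)) := by ring
    _ ≤ massMeasure T Set.univ + massMeasure T' Set.univ + ↑ε := by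
        refine add_le_add_right ?_ _
        rw [← ENNReal.ofReal_add (by positivity) (by positivity), ← ENNReal.ofReal_coe_nnreal]
        exact ENNReal.ofReal_le_ofReal (by linarith)

end Main

/-- `(D_k(X), M)` is a Banach space: `D_k(X)` is closed under the pointwise vector space
operations, the mass `M(T) = ‖T‖(X)` is a norm on it, and it is complete: every `M`-Cauchy
sequence in `D_k(X)` converges in mass norm to an element of `D_k(X)`. -/
theorem dk_banach {X : Type*} [MetricSpace X] [MeasurableSpace X] [BorelSpace X] {k : ℕ} :
    -- `D_k(X)` is a vector space under pointwise operations
    (∀ T T' : Func X k, MemDk T → MemDk T' → MemDk (T + T')) ∧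
    (∀ (c : ℝ) (T : Func X k), MemDk T → MemDk (c • T)) ∧
    -- `M` is a norm
    (∀ T : Func X k, MemDk T → (massMeasure T Set.univ = 0 ↔ DkEq T 0)) ∧
    (∀ (c : ℝ) (T : Func X k), MemDk T →
      massMeasure (c • T) Set.univ = ENNReal.ofReal |c| * massMeasure T Set.univ) ∧
    (∀ T T' : Func X k, MemDk T → MemDk T' →
      massMeasure (T + T') Set.univ ≤ massMeasure T Set.univ + massMeasure T' Set.univ) ∧
    -- completeness
    (∀ Ts : ℕ → Func X k, (∀ n, MemDk (Ts n)) →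
      (∀ ε : ℝ, 0 < ε → ∃ N : ℕ, ∀ m ≥ N, ∀ n ≥ N,
        massMeasure (Ts m - Ts n) Set.univ < ENNReal.ofReal ε) →
      ∃ T : Func X k, MemDk T ∧
        Tendsto (fun n => massMeasure (Ts n - T) Set.univ) atTop (nhds 0)) := by
  exact ⟨fun T T' hT hT' => hT.add hT',
    fun c T hT => hT.smul c,
    fun T hT => mass_zero_iff T hT,
    fun c T hT => mass_smul_eq c T hT,
    fun T T' hT hT' => mass_add_le T T' hT hT',
    fun Ts hTs hCau => dk_complete Ts hTs hCau⟩
end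
end

section
/- Let φ : X → Y be a bi-Lipschitz embedding of metric spaces and k ≥ 0. Then the push-forward φ_# : D_k(X) → D_k(Y) is injective. -/
open MeasureTheory Metric Set Filter

noncomputable section

section Aux
variable {X Y : Type*} [MetricSpace X] [MetricSpace Y]

/-- Extend a Lipschitz function along a bi-Lipschitz embedding. -/
lemma my_extend_lip [Nonempty X] (φ : X → Y) (L : ℝ) (hL : 1 ≤ L)
    (hbi : ∀ x x' : X,
      L⁻¹ * dist x x' ≤ dist (φ x) (φ x') ∧ dist (φ x) (φ x') ≤ L * dist x x')
    (h : X → ℝ) (K : NNReal) (hK : LipschitzWith K h) :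
    ∃ g : Y → ℝ, LipschitzWith (K * L.toNNReal) g ∧ ∀ x, g (φ x) = h x := by
  have hL0 : (0:ℝ) < L := lt_of_lt_of_le one_pos hL
  have hinj : Function.Injective φ := by
    intro x x' hxx
    have := (hbi x x').1
    rw [hxx, dist_self] at this
    have : dist x x' ≤ 0 := by
      nlinarith [inv_pos.mpr hL0, dist_nonneg (x := x) (y := x')]
    exact dist_le_zero.mp this
  set ψ := Function.invFun φ with hψ
  have hleft : ∀ x, ψ (φ x) = x := fun x => Function.leftInverse_invFun hinj x
  have key : ∀ x x' : X, dist x x' ≤ L * dist (φ x) (φ x') := by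
    intro x x'
    have h1 := (hbi x x').1
    calc dist x x' = L * (L⁻¹ * dist x x') := by field_simp
      _ ≤ L * dist (φ x) (φ x') := by nlinarith
  have hlipOn : LipschitzOnWith (K * L.toNNReal) (h ∘ ψ) (Set.range φ) := by
    rw [lipschitzOnWith_iff_dist_le_mul]
    rintro y ⟨x, rfl⟩ y' ⟨x', rfl⟩
    simp only [Function.comp_apply, hleft]
    have h1 := hK.dist_le_mul x x'
    have h2 := key x x'
    have hcast : ((K * L.toNNReal : NNReal) : ℝ) = (K : ℝ) * L := by
      simp [Real.coe_toNNReal L hL0.le]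
    rw [hcast]
    calc dist (h x) (h x') ≤ K * dist x x' := h1
      _ ≤ K * (L * dist (φ x) (φ x')) := by
          exact mul_le_mul_of_nonneg_left h2 K.coe_nonneg
      _ = (K : ℝ) * L * dist (φ x) (φ x') := by ring
  obtain ⟨g, hg, hgeq⟩ := hlipOn.extend_real
  exact ⟨g, hg, fun x => by
    have := hgeq (Set.mem_range_self x)
    simpa [hleft] using this.symm⟩
end Aux

/-- For a bi-Lipschitz embedding `φ : X → Y`, the push-forward `φ_# : D_k(X) → D_k(Y)` is
injective. -/
theorem pushF_injective_of_biLipschitz {X Y : Type*} [MetricSpace X] [MeasurableSpace X]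
    [BorelSpace X] [MetricSpace Y] [MeasurableSpace Y] [BorelSpace Y] {k : ℕ}
    (φ : X → Y) (L : ℝ) (hL : 1 ≤ L)
    (hbi : ∀ x x' : X,
      L⁻¹ * dist x x' ≤ dist (φ x) (φ x') ∧ dist (φ x) (φ x') ≤ L * dist x x')
    (T T' : Func X k) (hT : MemDk T) (hT' : MemDk T')
    (hpush : DkEq (pushF φ T) (pushF φ T')) :
    DkEq T T' := by
  rintro f π ⟨hf, hπ⟩
  by_cases hne : Nonempty X
  · obtain ⟨⟨Kf, hKf⟩, C, hC⟩ := hf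
    obtain ⟨g0, hg0lip, hg0eq⟩ := my_extend_lip φ L hL hbi f Kf hKf
    set g : Y → ℝ := fun y => max (min (g0 y) C) (-C) with hg
    have hC0 : 0 ≤ C := le_trans (abs_nonneg _) (hC (Classical.arbitrary X))
    have hglip : LipschitzWith (Kf * L.toNNReal) g := (hg0lip.min_const C).max_const (-C)
    have hgbd : ∀ y, |g y| ≤ C := by
      intro y; rw [abs_le]
      exact ⟨le_max_right _ _, max_le (min_le_right _ _) (by linarith)⟩
    have hgeq : ∀ x, g (φ x) = f x := by
      intro x
      have h1 := (abs_le.mp (hC x)).1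
      have h2 := (abs_le.mp (hC x)).2
      simp only [hg, hg0eq x]
      rw [min_eq_left h2, max_eq_left (by linarith : -C ≤ f x)]
    choose σ hσlip hσeq using fun i =>
      my_extend_lip φ L hL hbi (π i) (hπ i).choose (hπ i).choose_spec
    have hdom : InDomain g σ := ⟨⟨⟨_, hglip⟩, C, hgbd⟩, fun i => ⟨_, hσlip i⟩⟩
    have h := hpush g σ hdom
    unfold pushF at h
    have e1 : g ∘ φ = f := funext hgeq
    have e2 : (fun i => σ i ∘ φ) = π := funext fun i => funext fun x => hσeq i x
    rwa [e1, e2] at h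
  · haveI hsub : Subsingleton (X → ℝ) := ⟨fun a b => funext fun x => absurd ⟨x⟩ hne⟩
    have hdom : InDomain (fun _ : Y => (0:ℝ)) (fun _ : Fin k => fun _ : Y => (0:ℝ)) :=
      ⟨⟨⟨0, LipschitzWith.const 0⟩, 0, by simp⟩, fun i => ⟨0, LipschitzWith.const 0⟩⟩
    have h := hpush _ _ hdom
    unfold pushF at h
    have e1 : (fun _ : Y => (0:ℝ)) ∘ φ = f := Subsingleton.elim _ _
    have e2 : (fun i : Fin k => (fun _ : Y => (0:ℝ)) ∘ φ) = π :=
      funext fun i => Subsingleton.elim _ _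
    rwa [e1, e2] at h
end
end
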